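/- arXiv:2308.15175 — 8 statements merged into one kernel-verified Lean document; each statement's English description precedes it below -/
import Mathlib

section
/- Let p be a prime and let δ > 0. Then there exists K = K(p, δ) with the following property: for every finite-dimensional vector space G over 𝔽_p and every set A ⊆ G with |A| ≥ δ|G|, the set 2A − 2A = {a₁ + a₂ − a₃ − a₄ : a₁, a₂, a₃, a₄ ∈ A} contains a linear subspace of G of codimension at most K. -/
open Finset Complex Polynomial

section Aux

variable {p : ℕ} [Fact p.Prime] {G : Type} [AddCommGroup G] [Module (ZMod p) G]

lemma aux_psmul_zero (x : G) : p • x = 0 := by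
  rw [← Nat.cast_smul_eq_nsmul (ZMod p), ZMod.natCast_self, zero_smul]

lemma aux_pow_p (ψ : AddChar G ℂ) (x : G) : ψ x ^ p = 1 := by
  rw [← AddChar.map_nsmul_eq_pow, aux_psmul_zero, AddChar.map_zero_eq_one]

/-- The kernel of a complex character, as a `ZMod p`-submodule. -/
def charKer (p : ℕ) [Fact p.Prime] {G : Type} [AddCommGroup G] [Module (ZMod p) G]
    (ψ : AddChar G ℂ) : Submodule (ZMod p) G where
  carrier := {x | ψ x = 1}
  add_mem' := by
    intro a b ha hb
    simp only [Set.mem_setOf_eq] at *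
    rw [AddChar.map_add_eq_mul, ha, hb, one_mul]
  zero_mem' := AddChar.map_zero_eq_one ψ
  smul_mem' := by
    intro c x hx
    simp only [Set.mem_setOf_eq] at *
    have h : c • x = c.val • x := by
      rw [← Nat.cast_smul_eq_nsmul (ZMod p), ZMod.natCast_val, ZMod.cast_id]
    rw [h, AddChar.map_nsmul_eq_pow, hx, one_pow]

lemma aux_ne_zero (p : ℕ) [Fact p.Prime] {G' : Type} [AddCommGroup G'] [Module (ZMod p) G']
    (ψ : AddChar G' ℂ) (x : G') : ψ x ≠ 0 := by
  intro h
  have := aux_pow_p (p := p) ψ x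
  rw [h, zero_pow (Fact.out : p.Prime).pos.ne'] at this
  exact zero_ne_one this

lemma mem_charKer {ψ : AddChar G ℂ} {x : G} : x ∈ charKer p ψ ↔ ψ x = 1 := Iff.rfl

variable [Fintype G]

lemma card_le_charKer (ψ : AddChar G ℂ) :
    Fintype.card G ≤ p * Nat.card (charKer p ψ) := by
  classical
  have hp : 0 < p := (Fact.out : p.Prime).pos
  have hker : Nat.card (charKer p ψ) = (univ.filter fun x : G => ψ x = 1).card := by
    rw [Nat.card_eq_fintype_card]
    exact Fintype.card_subtype _
  have himg : (univ.image (⇑ψ)).card ≤ p := by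
    have hsub : univ.image (⇑ψ) ⊆ (nthRoots p (1 : ℂ)).toFinset := by
      intro z hz
      obtain ⟨x, -, rfl⟩ := mem_image.1 hz
      rw [Multiset.mem_toFinset, mem_nthRoots hp]
      exact aux_pow_p ψ x
    calc (univ.image (⇑ψ)).card ≤ (nthRoots p (1 : ℂ)).toFinset.card := card_le_card hsub
      _ ≤ Multiset.card (nthRoots p (1 : ℂ)) := Multiset.toFinset_card_le _
      _ ≤ p := card_nthRoots p 1
  have hfib : ∀ z ∈ univ.image (⇑ψ),
      (univ.filter fun x : G => ψ x = z).card ≤ Nat.card (charKer p ψ) := by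
    intro z hz
    obtain ⟨x₀, -, hx₀⟩ := mem_image.1 hz
    rw [hker]
    apply card_le_card_of_injOn (fun x => x - x₀)
    · intro x hx
      simp only [mem_coe, mem_filter, mem_univ, true_and] at hx ⊢
      rw [sub_eq_add_neg, AddChar.map_add_eq_mul, AddChar.map_neg_eq_inv, hx, hx₀,
        mul_inv_cancel₀ (hx₀ ▸ aux_ne_zero p ψ x₀)]
    · intro a _ b _ hab
      exact sub_left_injective hab
  calc Fintype.card G = ∑ z ∈ univ.image (⇑ψ), (univ.filter fun x : G => ψ x = z).card := by
        rw [← card_univ]; exact card_eq_sum_card_image _ _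
    _ ≤ (univ.image (⇑ψ)).card * Nat.card (charKer p ψ) := by
        rw [← smul_eq_mul]; exact sum_le_card_nsmul _ _ _ hfib
    _ ≤ p * Nat.card (charKer p ψ) := Nat.mul_le_mul_right _ himg

lemma finrank_charKer (ψ : AddChar G ℂ) :
    Module.finrank (ZMod p) G ≤ 1 + Module.finrank (ZMod p) (charKer p ψ) := by
  classical
  have h1 : Fintype.card G = p ^ Module.finrank (ZMod p) G := by
    have := Module.card_eq_pow_finrank (K := ZMod p) (V := G)
    rwa [ZMod.card] at this
  haveI : Fintype (charKer p ψ) := Fintype.ofFinite _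
  have h2 : Nat.card (charKer p ψ) = p ^ Module.finrank (ZMod p) (charKer p ψ) := by
    rw [Nat.card_eq_fintype_card]
    have := Module.card_eq_pow_finrank (K := ZMod p) (V := charKer p ψ)
    rwa [ZMod.card] at this
  have h3 := card_le_charKer (p := p) ψ
  rw [h1, h2, ← pow_succ'] at h3
  have := (Nat.pow_le_pow_iff_right (Fact.out : p.Prime).one_lt).1 h3
  omega

lemma finrank_iInf [FiniteDimensional (ZMod p) G] (S : Finset (AddChar G ℂ)) :
    Module.finrank (ZMod p) G ≤ S.card + Module.finrank (ZMod p) ↥(⨅ ψ ∈ S, charKer p ψ) := by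
  classical
  induction S using Finset.induction with
  | empty =>
    rw [show (⨅ ψ ∈ (∅ : Finset (AddChar G ℂ)), charKer p ψ) = ⊤ by simp, finrank_top]
    simp
  | @insert a s ha ih =>
    have hins : (⨅ ψ ∈ insert a s, charKer p ψ) = charKer p a ⊓ ⨅ ψ ∈ s, charKer p ψ := by
      exact Finset.iInf_insert a s _
    set W' := ⨅ ψ ∈ s, charKer p ψ with hW'
    have e1 := Submodule.finrank_sup_add_finrank_inf_eq (charKer p a) W'
    have e2 : Module.finrank (ZMod p) ↥(charKer p a ⊔ W') ≤ Module.finrank (ZMod p) G :=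
      Submodule.finrank_le _
    have e3 := finrank_charKer (p := p) a
    rw [hins, Finset.card_insert_of_notMem ha]
    omega

end Aux

section Fourier

variable {G : Type} [AddCommGroup G] [Fintype G]

/-- Fourier coefficient of the indicator of `A'` at the character `ψ`. -/
noncomputable def fhat (A' : Finset G) (ψ : AddChar G ℂ) : ℂ := ∑ a ∈ A', ψ a

lemma fhat_zero (A' : Finset G) : fhat A' (0 : AddChar G ℂ) = (A'.card : ℂ) := by
  simp [fhat]

lemma parseval (A' : Finset G) :
    ∑ ψ : AddChar G ℂ, Complex.normSq (fhat A' ψ) = (Fintype.card G : ℝ) * A'.card := by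
  classical
  have h2 : ∀ ψ : AddChar G ℂ,
      (Complex.normSq (fhat A' ψ) : ℂ) = ∑ q ∈ A' ×ˢ A', ψ (q.1 - q.2) := by
    intro ψ
    rw [← Complex.mul_conj, fhat, map_sum, Finset.sum_mul_sum, Finset.sum_product]
    refine Finset.sum_congr rfl fun a _ => Finset.sum_congr rfl fun b _ => ?_
    rw [← AddChar.map_neg_eq_conj, ← AddChar.map_add_eq_mul, sub_eq_add_neg]
  have hc : ∑ ψ : AddChar G ℂ, (Complex.normSq (fhat A' ψ) : ℂ)
      = (Fintype.card G : ℂ) * A'.card := by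
    rw [Finset.sum_congr rfl fun ψ _ => h2 ψ, Finset.sum_comm]
    have : ∀ q ∈ A' ×ˢ A', ∑ ψ : AddChar G ℂ, ψ (q.1 - q.2)
        = if q.1 - q.2 = 0 then (Fintype.card G : ℂ) else 0 := fun q _ =>
      AddChar.sum_apply_eq_ite _
    rw [Finset.sum_congr rfl this, ← Finset.sum_filter]
    have hfil : (A' ×ˢ A').filter (fun q => q.1 - q.2 = 0) = A'.diag := by
      ext q
      simp only [Finset.mem_filter, Finset.mem_product, Finset.mem_diag, sub_eq_zero]
      constructor
      · rintro ⟨⟨h1, h2⟩, h3⟩; exact ⟨h1, h3⟩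
      · rintro ⟨h1, h2⟩; exact ⟨⟨h1, h2 ▸ h1⟩, h2⟩
    rw [hfil, Finset.sum_const, Finset.diag_card, nsmul_eq_mul, mul_comm]
  have := hc
  rw [← Complex.ofReal_sum] at this
  exact_mod_cast this

lemma key_count [DecidableEq G] (A' : Finset G) (x : G) :
    ∑ ψ : AddChar G ℂ, (Complex.normSq (fhat A' ψ) : ℂ) ^ 2 * ψ x
      = (Fintype.card G : ℂ) *
        (((A' ×ˢ A' ×ˢ A' ×ˢ A').filter
          fun q : G × G × G × G => q.2.2.2 + q.2.2.1 - q.2.1 - q.1 + x = 0).card : ℂ) := by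
  classical
  have h1 : ∀ ψ : AddChar G ℂ, (Complex.normSq (fhat A' ψ) : ℂ) ^ 2 * ψ x
      = ∑ a1 ∈ A', ∑ a2 ∈ A', ∑ a3 ∈ A', ∑ a4 ∈ A', ψ (a4 + a3 - a2 - a1 + x) := by
    intro ψ
    have e : (Complex.normSq (fhat A' ψ) : ℂ) ^ 2 * ψ x
        = (∑ a1 ∈ A', ψ a1) * ((∑ a2 ∈ A', ψ a2) * ((∑ a3 ∈ A', (starRingEnd ℂ) (ψ a3)) *
          ((∑ a4 ∈ A', (starRingEnd ℂ) (ψ a4)) * ψ x))) := by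
      rw [← Complex.mul_conj, fhat, map_sum]
      ring
    rw [e]
    simp only [Finset.sum_mul, Finset.mul_sum]
    refine Finset.sum_congr rfl fun a1 _ => Finset.sum_congr rfl fun a2 _ =>
      Finset.sum_congr rfl fun a3 _ => Finset.sum_congr rfl fun a4 _ => ?_
    rw [← AddChar.map_neg_eq_conj, ← AddChar.map_neg_eq_conj, ← AddChar.map_add_eq_mul,
      ← AddChar.map_add_eq_mul, ← AddChar.map_add_eq_mul, ← AddChar.map_add_eq_mul]
    have h : a4 + (a3 + (-a2 + (-a1 + x))) = a4 + a3 - a2 - a1 + x := by abel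
    rw [h]
  have h2 : ∀ ψ : AddChar G ℂ, (Complex.normSq (fhat A' ψ) : ℂ) ^ 2 * ψ x
      = ∑ q ∈ A' ×ˢ A' ×ˢ A' ×ˢ A',
          ψ ((q : G × G × G × G).2.2.2 + q.2.2.1 - q.2.1 - q.1 + x) := by
    intro ψ
    rw [h1 ψ]
    simp only [Finset.sum_product]
  rw [Finset.sum_congr rfl fun ψ _ => h2 ψ, Finset.sum_comm]
  have h3 : ∀ q ∈ A' ×ˢ A' ×ˢ A' ×ˢ A',
      ∑ ψ : AddChar G ℂ, ψ ((q : G × G × G × G).2.2.2 + q.2.2.1 - q.2.1 - q.1 + x)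
      = if (q : G × G × G × G).2.2.2 + q.2.2.1 - q.2.1 - q.1 + x = 0
          then (Fintype.card G : ℂ) else 0 := fun q _ =>
    AddChar.sum_apply_eq_ite _
  rw [Finset.sum_congr rfl h3, ← Finset.sum_filter, Finset.sum_const, nsmul_eq_mul, mul_comm]

end Fourier


set_option maxHeartbeats 2000000 in
/-- **Bogolyubov argument** (Theorem 1 of the paper): if `A ⊆ G` has density at
least `δ`, then `2A - 2A` contains a subspace of codimension `O_δ(1)`. -/
theorem bogolyubov (p : ℕ) [Fact p.Prime] (δ : ℝ) (hδ : 0 < δ) :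
    ∃ K : ℕ,
      ∀ (G : Type) [AddCommGroup G] [Module (ZMod p) G]
        [FiniteDimensional (ZMod p) G] [Finite G]
        (A : Set G),
        (Nat.card A : ℝ) ≥ δ * Nat.card G →
      ∃ W : Submodule (ZMod p) G,
        (W : Set G) ⊆
          {g : G | ∃ a₁ a₂ a₃ a₄, a₁ ∈ A ∧ a₂ ∈ A ∧ a₃ ∈ A ∧ a₄ ∈ A ∧
            g = a₁ + a₂ - a₃ - a₄} ∧
        Module.finrank (ZMod p) G - Module.finrank (ZMod p) ↥W ≤ K := by
  classical
  refine ⟨⌈(2 : ℝ) / δ ^ 2⌉₊, ?_⟩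
  intro G _ _ _ _ A hA
  cases nonempty_fintype G
  set A' : Finset G := A.toFinset with hA'def
  set a : ℝ := (A'.card : ℝ) with ha_def
  set g : ℝ := (Fintype.card G : ℝ) with hg_def
  have hAcard : (Nat.card ↥A : ℝ) = a := by
    rw [ha_def, hA'def, Nat.card_coe_set_eq, Set.ncard_eq_toFinset_card']
  have hGcard : (Nat.card G : ℝ) = g := by rw [hg_def, Nat.card_eq_fintype_card]
  rw [hAcard, hGcard] at hA
  have hg0 : (0 : ℝ) < g := by
    rw [hg_def]; exact_mod_cast Fintype.card_pos
  have ha0 : (0 : ℝ) < a := lt_of_lt_of_le (by positivity) hA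
  -- the spectrum
  set S : Finset (AddChar G ℂ) :=
    Finset.univ.filter fun ψ => ψ ≠ 0 ∧ δ / 2 * a ^ 2 ≤ Complex.normSq (fhat A' ψ) with hSdef
  have hpars : ∑ ψ : AddChar G ℂ, Complex.normSq (fhat A' ψ) = g * a := parseval A'
  -- size of the spectrum
  have hScard : (S.card : ℝ) ≤ 2 / δ ^ 2 := by
    have h1 : S.card • (δ / 2 * a ^ 2) ≤ ∑ ψ ∈ S, Complex.normSq (fhat A' ψ) :=
      Finset.card_nsmul_le_sum S _ _ fun ψ hψ => (Finset.mem_filter.1 hψ).2.2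
    have h2 : ∑ ψ ∈ S, Complex.normSq (fhat A' ψ) ≤ g * a := by
      rw [← hpars]
      exact Finset.sum_le_sum_of_subset_of_nonneg (Finset.subset_univ S)
        (fun ψ _ _ => Complex.normSq_nonneg _)
    rw [nsmul_eq_mul] at h1
    have h3 : (S.card : ℝ) * (δ / 2 * a ^ 2) ≤ g * a := le_trans h1 h2
    have h4 : g ≤ a / δ := by
      rw [le_div_iff₀ hδ]; linarith [hA]
    have h5 : (S.card : ℝ) * (δ / 2 * a ^ 2) ≤ a / δ * a := by
      refine le_trans h3 ?_
      have := mul_le_mul_of_nonneg_right h4 ha0.le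
      linarith
    have h6 : (S.card : ℝ) * (δ / 2 * a ^ 2) ≤ a ^ 2 / δ := by
      have : a / δ * a = a ^ 2 / δ := by ring
      linarith [h5, this.symm.le, this.le]
    have hpos : (0 : ℝ) < δ / 2 * a ^ 2 := by positivity
    have h7 : (S.card : ℝ) ≤ a ^ 2 / δ / (δ / 2 * a ^ 2) := (le_div_iff₀ hpos).2 h6
    have h8 : a ^ 2 / δ / (δ / 2 * a ^ 2) = 2 / δ ^ 2 := by
      field_simp
    rwa [h8] at h7
  have hSK : S.card ≤ ⌈(2 : ℝ) / δ ^ 2⌉₊ := by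
    have := le_trans hScard (Nat.le_ceil ((2 : ℝ) / δ ^ 2))
    exact_mod_cast this
  refine ⟨⨅ ψ ∈ S, charKer p ψ, ?_, ?_⟩
  · -- the subspace is contained in 2A - 2A
    intro x hx
    rw [SetLike.mem_coe] at hx
    have hx1 : ∀ ψ ∈ S, ψ x = 1 := by
      intro ψ hψ
      have := (Submodule.mem_iInf _).1 hx ψ
      exact mem_charKer.1 ((Submodule.mem_iInf _).1 this hψ)
    have hxneg : ∀ ψ ∈ S, ψ (-x) = 1 := by
      intro ψ hψ
      rw [AddChar.map_neg_eq_inv, hx1 ψ hψ, inv_one]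
    -- lower bound for the real part of the Fourier sum at -x
    have hre : (∑ ψ : AddChar G ℂ, (Complex.normSq (fhat A' ψ) : ℂ) ^ 2 * ψ (-x)).re
        = ∑ ψ : AddChar G ℂ, Complex.normSq (fhat A' ψ) ^ 2 * (ψ (-x)).re := by
      rw [Complex.re_sum]
      refine Finset.sum_congr rfl fun ψ _ => ?_
      rw [← Complex.ofReal_pow, Complex.re_ofReal_mul]
    have hterm : ∀ ψ ∈ (Finset.univ : Finset (AddChar G ℂ)).erase 0,
        -(δ / 2 * a ^ 2) * Complex.normSq (fhat A' ψ)
          ≤ Complex.normSq (fhat A' ψ) ^ 2 * (ψ (-x)).re := by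
      intro ψ hψ
      have hψ0 : ψ ≠ 0 := (Finset.mem_erase.1 hψ).1
      by_cases hψS : ψ ∈ S
      · rw [hxneg ψ hψS]
        simp only [Complex.one_re, mul_one]
        have hnn := Complex.normSq_nonneg (fhat A' ψ)
        have hc : (0 : ℝ) ≤ δ / 2 * a ^ 2 := by positivity
        have := mul_nonneg hc hnn
        have := sq_nonneg (Complex.normSq (fhat A' ψ))
        nlinarith
      · have hsmall : Complex.normSq (fhat A' ψ) < δ / 2 * a ^ 2 := by
          by_contra h
          exact hψS (Finset.mem_filter.2 ⟨Finset.mem_univ _, hψ0, le_of_not_gt h⟩)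
        have hre1 : -1 ≤ (ψ (-x)).re := by
          have h1 : |(ψ (-x)).re| ≤ ‖ψ (-x)‖ := Complex.abs_re_le_norm _
          have h2 : ‖ψ (-x)‖ = 1 := by
            exact AddChar.norm_apply ψ (-x)
          rw [h2] at h1
          linarith [abs_le.1 h1]
        have hnn := Complex.normSq_nonneg (fhat A' ψ)
        nlinarith [mul_nonneg hnn (sub_nonneg.2 hsmall.le),
          mul_nonneg (mul_nonneg hnn hnn) (by linarith : (0:ℝ) ≤ (ψ (-x)).re + 1)]
    -- the trivial character contributes a⁴
    have h0mem : (0 : AddChar G ℂ) ∈ (Finset.univ : Finset (AddChar G ℂ)) := Finset.mem_univ _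
    have hsplit : ∑ ψ : AddChar G ℂ, Complex.normSq (fhat A' ψ) ^ 2 * (ψ (-x)).re
        = Complex.normSq (fhat A' (0 : AddChar G ℂ)) ^ 2 * ((0 : AddChar G ℂ) (-x)).re
          + ∑ ψ ∈ (Finset.univ : Finset (AddChar G ℂ)).erase 0,
              Complex.normSq (fhat A' ψ) ^ 2 * (ψ (-x)).re :=
      (Finset.add_sum_erase _ _ h0mem).symm
    have h0val : Complex.normSq (fhat A' (0 : AddChar G ℂ)) ^ 2 * ((0 : AddChar G ℂ) (-x)).re
        = a ^ 4 := by
      rw [fhat_zero, AddChar.zero_apply, Complex.one_re, mul_one]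
      have : Complex.normSq ((A'.card : ℂ)) = a * a := by
        rw [ha_def]; exact_mod_cast Complex.normSq_natCast A'.card
      rw [this]; ring
    have htail : -(δ / 2 * a ^ 2) * (g * a)
        ≤ ∑ ψ ∈ (Finset.univ : Finset (AddChar G ℂ)).erase 0,
            Complex.normSq (fhat A' ψ) ^ 2 * (ψ (-x)).re := by
      have hsum1 : ∑ ψ ∈ (Finset.univ : Finset (AddChar G ℂ)).erase 0,
          (-(δ / 2 * a ^ 2) * Complex.normSq (fhat A' ψ))
          ≤ ∑ ψ ∈ (Finset.univ : Finset (AddChar G ℂ)).erase 0,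
            Complex.normSq (fhat A' ψ) ^ 2 * (ψ (-x)).re :=
        Finset.sum_le_sum hterm
      have hsum2 : ∑ ψ ∈ (Finset.univ : Finset (AddChar G ℂ)).erase 0,
          Complex.normSq (fhat A' ψ) ≤ g * a := by
        rw [← hpars]
        exact Finset.sum_le_sum_of_subset_of_nonneg (Finset.subset_univ _)
          (fun ψ _ _ => Complex.normSq_nonneg _)
      calc -(δ / 2 * a ^ 2) * (g * a)
          ≤ -(δ / 2 * a ^ 2) * ∑ ψ ∈ (Finset.univ : Finset (AddChar G ℂ)).erase 0,
              Complex.normSq (fhat A' ψ) := by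
            apply mul_le_mul_of_nonpos_left hsum2
            have : (0 : ℝ) ≤ δ / 2 * a ^ 2 := by positivity
            linarith
        _ = ∑ ψ ∈ (Finset.univ : Finset (AddChar G ℂ)).erase 0,
              (-(δ / 2 * a ^ 2) * Complex.normSq (fhat A' ψ)) := Finset.mul_sum _ _ _
        _ ≤ _ := hsum1
    have hRepos : 0 < (∑ ψ : AddChar G ℂ, (Complex.normSq (fhat A' ψ) : ℂ) ^ 2 * ψ (-x)).re := by
      rw [hre, hsplit, h0val]
      have hfinal : 0 < a ^ 4 + -(δ / 2 * a ^ 2) * (g * a) := by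
        have h6 : δ * g ≤ a := by linarith [hA]
        have t1 : 0 ≤ a ^ 3 * (a - δ * g) :=
          mul_nonneg (by positivity) (sub_nonneg.2 h6)
        have t2 : 0 < δ * g * a ^ 3 := by positivity
        nlinarith [t1, t2]
      linarith [htail]
    -- conclude via the counting identity
    have hkey := key_count A' (-x)
    set c : ℕ := ((A' ×ˢ A' ×ˢ A' ×ˢ A').filter
      fun q : G × G × G × G => q.2.2.2 + q.2.2.1 - q.2.1 - q.1 + -x = 0).card with hc_def
    have hcpos : 0 < c := by
      rcases Nat.eq_zero_or_pos c with h0 | h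
      · exfalso
        rw [h0] at hkey
        norm_num at hkey
        rw [hkey] at hRepos
        norm_num at hRepos
      · exact h
    obtain ⟨q, hq⟩ := Finset.card_pos.1 hcpos
    rw [Finset.mem_filter] at hq
    obtain ⟨hqmem, hqeq⟩ := hq
    rw [Finset.mem_product] at hqmem
    obtain ⟨h1, hqmem⟩ := hqmem
    rw [Finset.mem_product] at hqmem
    obtain ⟨h2, hqmem⟩ := hqmem
    rw [Finset.mem_product] at hqmem
    obtain ⟨h3, h4⟩ := hqmem
    refine ⟨q.2.2.2, q.2.2.1, q.2.1, q.1, ?_, ?_, ?_, ?_, ?_⟩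
    · exact Set.mem_toFinset.1 h4
    · exact Set.mem_toFinset.1 h3
    · exact Set.mem_toFinset.1 h2
    · exact Set.mem_toFinset.1 h1
    · have := hqeq
      rw [add_neg_eq_zero] at this
      exact this.symm
  · -- codimension bound
    have := finrank_iInf (p := p) S
    omega
end

section
/- Let p be a prime, let G and H be finite-dimensional vector spaces over 𝔽_p, and fix a nondegenerate symmetric bilinear form on H, with ⊥ denoting orthogonal complement with respect to this form. Let A ⊆ G × H be a transverse set and for each x ∈ G set V_x = (A_{x·})^⊥. Then (V_x)_{x∈G} is a linear system of subspaces inside H: V_0 = {0}, and V_{x₁+x₂} ⊆ V_{x₁} + V_{x₂} for all x₁, x₂ ∈ G. -/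
lemma orth_sup_aux {p : ℕ} [Fact p.Prime] {H : Type} [AddCommGroup H]
    [Module (ZMod p) H] (B : LinearMap.BilinForm (ZMod p) H)
    (S T : Submodule (ZMod p) H) :
    B.orthogonal (S ⊔ T) = B.orthogonal S ⊓ B.orthogonal T := by
  ext m
  simp only [LinearMap.BilinForm.mem_orthogonal_iff, Submodule.mem_inf]
  constructor
  · exact fun h => ⟨fun n hn => h n (Submodule.mem_sup_left hn),
      fun n hn => h n (Submodule.mem_sup_right hn)⟩
  · rintro ⟨h₁, h₂⟩ n hn
    obtain ⟨a, ha, b, hb, rfl⟩ := Submodule.mem_sup.mp hn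
    have := h₁ a ha
    have := h₂ b hb
    simp [LinearMap.add_apply, *]

/-- Orthogonal complements of the columns of a transverse set form a linear
system of subspaces: `V_0 = {0}` and `V_{x₁+x₂} ⊆ V_{x₁} + V_{x₂}`. -/
theorem transverse_gives_linear_system
    (p : ℕ) [Fact p.Prime]
    (G H : Type) [AddCommGroup G] [AddCommGroup H]
    [Module (ZMod p) G] [Module (ZMod p) H]
    [FiniteDimensional (ZMod p) G] [FiniteDimensional (ZMod p) H]
    (B : LinearMap.BilinForm (ZMod p) H)
    (hBnd : B.Nondegenerate) (hBsymm : ∀ u v : H, B u v = B v u)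
    (A : Set (G × H))
    (W : G → Submodule (ZMod p) H)
    (hW : ∀ x : G, {y : H | (x, y) ∈ A} = ↑(W x))
    (hcol : ∀ y : H, ∃ S : Submodule (ZMod p) G, {x : G | (x, y) ∈ A} = ↑S)
    (V : G → Submodule (ZMod p) H)
    (hV : ∀ x : G, V x = B.orthogonal (W x)) :
    V 0 = ⊥ ∧ ∀ x₁ x₂ : G, V (x₁ + x₂) ≤ V x₁ ⊔ V x₂ := by
  have hRefl : B.IsRefl := fun u v h => by rw [hBsymm]; exact h
  have hmem : ∀ x y, (x, y) ∈ A ↔ y ∈ W x := by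
    intro x y
    constructor
    · intro h; have := hW x ▸ (show y ∈ {y : H | (x, y) ∈ A} from h); exact this
    · intro h; have : y ∈ ({y : H | (x, y) ∈ A}) := (hW x).symm ▸ h; exact this
  constructor
  · -- W 0 = ⊤
    have hW0 : W 0 = ⊤ := by
      rw [eq_top_iff]
      intro y _
      obtain ⟨S, hS⟩ := hcol y
      have h0 : (0 : G) ∈ {x : G | (x, y) ∈ A} := by
        rw [hS]; exact S.zero_mem
      exact (hmem 0 y).mp h0
    rw [hV 0, hW0, LinearMap.BilinForm.orthogonal_top_eq_bot hBnd]
  · intro x₁ x₂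
    have hsub : W x₁ ⊓ W x₂ ≤ W (x₁ + x₂) := by
      intro y hy
      obtain ⟨S, hS⟩ := hcol y
      have h₁ : x₁ ∈ {x : G | (x, y) ∈ A} := (hmem x₁ y).mpr hy.1
      have h₂ : x₂ ∈ {x : G | (x, y) ∈ A} := (hmem x₂ y).mpr hy.2
      rw [hS] at h₁ h₂
      have : x₁ + x₂ ∈ {x : G | (x, y) ∈ A} := by rw [hS]; exact S.add_mem h₁ h₂
      exact (hmem _ y).mp this
    have key : V x₁ ⊔ V x₂ = B.orthogonal (W x₁ ⊓ W x₂) := by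
      have := LinearMap.BilinForm.orthogonal_orthogonal hBnd hRefl (V x₁ ⊔ V x₂)
      rw [← this]
      congr 1
      rw [hV x₁, hV x₂, orth_sup_aux,
        LinearMap.BilinForm.orthogonal_orthogonal hBnd hRefl,
        LinearMap.BilinForm.orthogonal_orthogonal hBnd hRefl]
    rw [key, hV (x₁ + x₂)]
    exact LinearMap.BilinForm.orthogonal_le hsub
end

section
/- Let p be a prime, H a finite-dimensional vector space over 𝔽_p, and d a nonnegative integer. Let U₁, U₂, U₃, U₄ ≤ H be subspaces of dimension d such that |U_{i₁} + U_{i₂} + U_{i₃}| = p^{3d} for any three distinct indices i₁, i₂, i₃ ∈ {1,2,3,4} and such that |U₁ + U₂ + U₃ + U₄| = p^{3d}. Let φ₄ : 𝔽_p^d → U₄ be a linear isomorphism. Then there exist linear isomorphisms φ_i : 𝔽_p^d → U_i for i ∈ {1,2,3} such that φ₁ + φ₂ = φ₃ + φ₄ (as linear maps into H). -/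
/-!
Dimension counting turns the hypotheses into `U₄ ≤ U₁ + U₂ + U₃` and `U₄ ∩ (Uⱼ + Uₖ) = 0`
for all distinct `j, k ∈ [3]`. Write each `u ∈ U₄` linearly as `u = a₁(u) + a₂(u) + a₃(u)` with
`aᵢ(u) ∈ Uᵢ`. Each component `aᵢ` is injective, since `aᵢ(u) = 0` puts `u` in the sum of the
other two subspaces, hence an isomorphism `U₄ ≃ Uᵢ` as the dimensions agree. Then
`φ₁ = a₁ ∘ φ₄`, `φ₂ = a₂ ∘ φ₄` and `φ₃ = -a₃ ∘ φ₄` work.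
-/

open Module

theorem Module.finrank_eq_of_natCard_eq_pow {K M : Type*} [DivisionRing K] [Finite K]
    [AddCommGroup M] [Module K M] [Module.Finite K M] {n : ℕ}
    (h : Nat.card M = Nat.card K ^ n) : finrank K M = n :=
  Nat.pow_right_injective Finite.one_lt_card (Module.natCard_eq_pow_finrank.symm.trans h)

theorem Submodule.injective_of_coe_eq_add_of_disjoint {R V : Type*} [Ring R] [AddCommGroup V]
    [Module R V] {X A W : Submodule R V} (f : X →ₗ[R] A) (r : X → W)
    (hfr : ∀ x : X, (x : V) = f x + r x) (hXW : Disjoint X W) : Function.Injective f := by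
  refine (injective_iff_map_eq_zero f).mpr fun x hx ↦ Subtype.ext ?_
  have hxW : (x : V) ∈ W := by
    rw [hfr x, hx, ZeroMemClass.coe_zero, zero_add]
    exact (r x).2
  exact disjoint_def.mp hXW x x.2 hxW

section

variable {K V : Type*} [DivisionRing K] [AddCommGroup V] [Module K V]

theorem LinearMap.exists_eq_add_of_range_le_sup {M : Type*} [AddCommGroup M] [Module K M]
    (F : M →ₗ[K] V) {A B : Submodule K V} (h : range F ≤ A ⊔ B) :
    ∃ (f : M →ₗ[K] A) (g : M →ₗ[K] B), ∀ m, F m = f m + g m := by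
  set c := A.subtype.coprod B.subtype
  have hc : range c = A ⊔ B := by
    rw [range_coprod, Submodule.range_subtype, Submodule.range_subtype]
  -- Over a division ring `M` is free, hence projective, so `F` lifts along `A × B ↠ A ⊔ B`.
  obtain ⟨s, hs⟩ := Module.projective_lifting_property c.rangeRestrict
    (F.codRestrict _ fun m ↦ hc ▸ h (mem_range_self F m)) c.surjective_rangeRestrict
  refine ⟨fst K A B ∘ₗ s, snd K A B ∘ₗ s, fun m ↦ ?_⟩
  simpa [c] using (congr_arg Subtype.val (LinearMap.congr_fun hs m)).symm

theorem Submodule.exists_linearMap_eq_add_add_of_le_sup {X A B C : Submodule K V}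
    (h : X ≤ A ⊔ B ⊔ C) :
    ∃ (f : X →ₗ[K] A) (g : X →ₗ[K] B) (k : X →ₗ[K] C), ∀ x : X, (x : V) = f x + g x + k x := by
  obtain ⟨fg, k, hfgk⟩ := X.subtype.exists_eq_add_of_range_le_sup (by rwa [range_subtype])
  obtain ⟨f, g, hfg⟩ := ((A ⊔ B).subtype ∘ₗ fg).exists_eq_add_of_range_le_sup
    ((LinearMap.range_comp_le_range _ _).trans_eq (range_subtype _))
  exact ⟨f, g, k, fun x ↦ (hfgk x).trans (congrArg (· + (k x : V)) (hfg x))⟩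

theorem Submodule.disjoint_sup_of_finrank_sup_eq_add [FiniteDimensional K V]
    {A B C : Submodule K V}
    (h : finrank K ↥(B ⊔ C ⊔ A) = finrank K B + finrank K C + finrank K A) :
    Disjoint A (B ⊔ C) := by
  have hsum := finrank_sup_add_finrank_inf_eq A (B ⊔ C)
  have hBC := finrank_add_le_finrank_add_finrank B C
  rw [sup_comm, h] at hsum
  rw [disjoint_iff, ← finrank_eq_zero]
  omega

theorem Submodule.exists_linearEquiv_add_eq_add_of_le_sup [FiniteDimensional K V]
    {X A B C : Submodule K V} (hle : X ≤ A ⊔ B ⊔ C) (hA : Disjoint X (B ⊔ C))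
    (hB : Disjoint X (A ⊔ C)) (hC : Disjoint X (A ⊔ B)) (hrA : finrank K X = finrank K A)
    (hrB : finrank K X = finrank K B) (hrC : finrank K X = finrank K C) :
    ∃ (eA : X ≃ₗ[K] A) (eB : X ≃ₗ[K] B) (eC : X ≃ₗ[K] C),
      ∀ x : X, (eA x : V) + eB x = eC x + x := by
  obtain ⟨f, g, k, hx⟩ := exists_linearMap_eq_add_add_of_le_sup hle
  have hf : Function.Injective f := injective_of_coe_eq_add_of_disjoint f
    (fun x ↦ ⟨g x + k x, add_mem (mem_sup_left (g x).2) (mem_sup_right (k x).2)⟩)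
    (fun x : X ↦ (hx x).trans (add_assoc _ _ _)) hA
  have hg : Function.Injective g := injective_of_coe_eq_add_of_disjoint g
    (fun x ↦ ⟨f x + k x, add_mem (mem_sup_left (f x).2) (mem_sup_right (k x).2)⟩)
    (fun x : X ↦ (hx x).trans ((add_assoc _ _ _).trans (add_left_comm _ _ _))) hB
  have hk : Function.Injective k := injective_of_coe_eq_add_of_disjoint k
    (fun x ↦ ⟨f x + g x, add_mem (mem_sup_left (f x).2) (mem_sup_right (g x).2)⟩)
    (fun x : X ↦ (hx x).trans (add_comm _ _)) hC
  refine ⟨f.linearEquivOfInjective hf hrA, g.linearEquivOfInjective hg hrB,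
    (k.linearEquivOfInjective hk hrC).trans (LinearEquiv.neg K), fun x ↦ ?_⟩
  simp only [LinearMap.linearEquivOfInjective_apply, LinearEquiv.trans_apply,
    LinearEquiv.neg_apply, NegMemClass.coe_neg]
  rw [hx x]
  abel

end

open Submodule in
/-- **Lemma 8 of the paper** (exact version of Lemma 34 of [AQV]): given four
`d`-dimensional subspaces in sufficiently general position and a linear isomorphism
`φ₄ : 𝔽_p^d → U₄`, there exist linear isomorphisms `φᵢ : 𝔽_p^d → Uᵢ`, `i ∈ [3]`,
with `φ₁ + φ₂ = φ₃ + φ₄`. -/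
theorem additive_quadruple_of_subspaces
    (p : ℕ) [Fact p.Prime]
    (H : Type) [AddCommGroup H] [Module (ZMod p) H]
    [FiniteDimensional (ZMod p) H]
    (d : ℕ) (U : Fin 4 → Submodule (ZMod p) H)
    (hdim : ∀ i, Module.finrank (ZMod p) ↥(U i) = d)
    (htriple : ∀ i₁ i₂ i₃ : Fin 4, i₁ ≠ i₂ → i₁ ≠ i₃ → i₂ ≠ i₃ →
      Nat.card ↥(U i₁ ⊔ U i₂ ⊔ U i₃) = p ^ (3 * d))
    (hquad : Nat.card ↥(U 0 ⊔ U 1 ⊔ U 2 ⊔ U 3) = p ^ (3 * d))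
    (φ₄ : (Fin d → ZMod p) ≃ₗ[ZMod p] ↥(U 3)) :
    ∃ (φ₁ : (Fin d → ZMod p) ≃ₗ[ZMod p] ↥(U 0))
      (φ₂ : (Fin d → ZMod p) ≃ₗ[ZMod p] ↥(U 1))
      (φ₃ : (Fin d → ZMod p) ≃ₗ[ZMod p] ↥(U 2)),
      ∀ v : Fin d → ZMod p,
        (↑(φ₁ v) + ↑(φ₂ v) : H) = ↑(φ₃ v) + ↑(φ₄ v) := by
  have hfinrank (W : Submodule (ZMod p) H) (hW : Nat.card W = p ^ (3 * d)) :
      finrank (ZMod p) W = d + d + d := by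
    rw [finrank_eq_of_natCard_eq_pow (n := 3 * d) (by rwa [Nat.card_zmod])]
    ring
  have hle : U 3 ≤ U 0 ⊔ U 1 ⊔ U 2 := by
    refine sup_eq_left.mp (eq_of_le_of_finrank_eq le_sup_left ?_).symm
    rw [hfinrank _ hquad, hfinrank _ (htriple 0 1 2 (by decide) (by decide) (by decide))]
  have hdisj (i j : Fin 4) (hij : i ≠ j := by decide) (hi : i ≠ 3 := by decide)
      (hj : j ≠ 3 := by decide) : Disjoint (U 3) (U i ⊔ U j) := by
    refine disjoint_sup_of_finrank_sup_eq_add ?_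
    rw [hfinrank _ (htriple i j 3 hij hi hj), hdim, hdim, hdim]
  obtain ⟨e₁, e₂, e₃, he⟩ := exists_linearEquiv_add_eq_add_of_le_sup hle
    (hdisj 1 2) (hdisj 0 2) (hdisj 0 1) ((hdim 3).trans (hdim 0).symm)
    ((hdim 3).trans (hdim 1).symm) ((hdim 3).trans (hdim 2).symm)
  exact ⟨φ₄.trans e₁, φ₄.trans e₂, φ₄.trans e₃, fun v ↦ he (φ₄ v)⟩
end

section
/- Let p be a prime and let G₁ and G₂ be finite-dimensional vector spaces over 𝔽_p. Let A ⊆ G₁ be a subset and let φ : A → G₂ be a map such that the number of triples (x, y, z) ∈ A³ for which both x + y − z ∈ A and φ(x) + φ(y) = φ(z) + φ(x + y − z) hold is at least (1 − ε)|G₁|³. If ε < 10⁻⁵, then there exists an affine map Φ : G₁ → G₂ such that Φ(x) = φ(x) holds for at least (1 − 5·ε^{1/4})|G₁| elements x ∈ A. -/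
open Finset in
set_option maxHeartbeats 2000000 in
/-- **Lemma 10 of the paper**: near-homomorphisms of vector spaces agree with affine
maps on most of their domain. -/
theorem near_homomorphism_affine
    (p : ℕ) [Fact p.Prime]
    (G₁ G₂ : Type) [AddCommGroup G₁] [AddCommGroup G₂]
    [Module (ZMod p) G₁] [Module (ZMod p) G₂]
    [FiniteDimensional (ZMod p) G₁] [FiniteDimensional (ZMod p) G₂]
    [Finite G₁] [Finite G₂]
    (A : Set G₁) (φ : G₁ → G₂) (ε : ℝ)
    (hcount : (Nat.card {t : G₁ × G₁ × G₁ | t.1 ∈ A ∧ t.2.1 ∈ A ∧ t.2.2 ∈ A ∧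
        t.1 + t.2.1 - t.2.2 ∈ A ∧
        φ t.1 + φ t.2.1 = φ t.2.2 + φ (t.1 + t.2.1 - t.2.2)} : ℝ) ≥
      (1 - ε) * (Nat.card G₁ : ℝ) ^ 3)
    (hε : ε < 10 ^ (-(5 : ℤ)) ) :
    ∃ (L : G₁ →ₗ[ZMod p] G₂) (c : G₂),
      (Nat.card {x : G₁ | x ∈ A ∧ L x + c = φ x} : ℝ) ≥
        (1 - 5 * ε ^ ((1 : ℝ) / 4)) * Nat.card G₁ := by
  classical
  cases nonempty_fintype G₁
  cases nonempty_fintype G₂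
  have hNcard : Nat.card G₁ = Fintype.card G₁ := Nat.card_eq_fintype_card
  set N : ℕ := Fintype.card G₁ with hNdef
  have hN0 : 0 < N := Fintype.card_pos
  have hN0R : (0:ℝ) < N := by exact_mod_cast hN0
  rw [hNcard] at hcount ⊢
  have hsetcard : ∀ (P : G₁ × G₁ × G₁ → Prop),
      Nat.card {x : G₁ × G₁ × G₁ | P x} = (Finset.univ.filter P).card := by
    intro P
    rw [Nat.card_coe_set_eq, Set.ncard_eq_toFinset_card', Set.toFinset_setOf]
  have hsetcard1 : ∀ (P : G₁ → Prop),
      Nat.card {x : G₁ | P x} = (Finset.univ.filter P).card := by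
    intro P
    rw [Nat.card_coe_set_eq, Set.ncard_eq_toFinset_card', Set.toFinset_setOf]
  set T : Finset (G₁ × G₁ × G₁) := Finset.univ.filter (fun t => t.1 ∈ A ∧ t.2.1 ∈ A ∧ t.2.2 ∈ A ∧
        t.1 + t.2.1 - t.2.2 ∈ A ∧
        φ t.1 + φ t.2.1 = φ t.2.2 + φ (t.1 + t.2.1 - t.2.2)) with hTdef
  rw [hsetcard] at hcount
  have hTle : (T.card : ℝ) ≤ (N:ℝ)^3 := by
    have h1 : T.card ≤ (Finset.univ : Finset (G₁ × G₁ × G₁)).card := Finset.card_le_univ T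
    have h2 : (Finset.univ : Finset (G₁ × G₁ × G₁)).card = N^3 := by
      simp [Finset.card_univ, Fintype.card_prod]; ring
    rw [h2] at h1
    exact_mod_cast h1
  -- ε is nonnegative
  rw [Finset.filter_congr_decidable] at hcount
  rw [← hTdef] at hcount
  have hT : ((T.card : ℕ) : ℝ) ≥ (1 - ε) * (N:ℝ)^3 := hcount
  clear hcount
  have hε0 : 0 ≤ ε := by
    by_contra h
    push_neg at h
    have h3 : (0:ℝ) < (N:ℝ)^3 := by positivity
    nlinarith [hT, hTle]
  rw [show ((10:ℝ) ^ (-(5:ℤ))) = 0.00001 by norm_num] at hε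
  have hε' : ε < 0.00001 := hε
  have hε1 : ε ≤ 1 := by linarith
  set β : ℝ := Real.sqrt ε with hβdef
  have hβ0 : 0 ≤ β := Real.sqrt_nonneg ε
  have hβsq : β^2 = ε := Real.sq_sqrt hε0
  have hβlt : β < 1/300 := by nlinarith
  -- change coordinates: triples (s, z, y) with z, z+s, y, y+s ∈ A and equal derivatives
  set pred' : G₁ × G₁ × G₁ → Prop := fun t => t.2.1 ∈ A ∧ t.2.1 + t.1 ∈ A ∧ t.2.2 ∈ A ∧
      t.2.2 + t.1 ∈ A ∧ φ (t.2.1 + t.1) - φ t.2.1 = φ (t.2.2 + t.1) - φ t.2.2 with hpred'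
  set T' : Finset (G₁ × G₁ × G₁) := Finset.univ.filter pred' with hT'def
  have hTT' : T'.card = T.card := by
    refine Finset.card_bij' (fun t _ => (t.2.1 + t.1, t.2.2, t.2.1))
      (fun t _ => (t.1 - t.2.2, t.2.2, t.2.1)) ?_ ?_ ?_ ?_
    · rintro ⟨s, z, y⟩ ht
      rw [hT'def, Finset.mem_filter] at ht
      obtain ⟨-, h1, h2, h3, h4, h5⟩ := ht
      rw [hTdef, Finset.mem_filter]
      refine ⟨Finset.mem_univ _, h2, h3, h1, ?_, ?_⟩
      · have e1 : z + s + y - z = y + s := by abel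
        rw [e1]; exact h4
      · have e1 : z + s + y - z = y + s := by abel
        rw [e1]
        have h6 := sub_eq_sub_iff_add_eq_add.mp h5
        rw [show φ (y + s) + φ z = φ z + φ (y + s) from add_comm _ _] at h6
        exact h6
    · rintro ⟨x, y, z⟩ ht
      rw [hTdef, Finset.mem_filter] at ht
      obtain ⟨-, h1, h2, h3, h4, h5⟩ := ht
      rw [hT'def, Finset.mem_filter]
      have e1 : z + (x - z) = x := by abel
      have e2 : y + (x - z) = x + y - z := by abel
      refine ⟨Finset.mem_univ _, h3, ?_, h2, ?_, ?_⟩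
      · rw [e1]; exact h1
      · rw [e2]; exact h4
      · rw [e1, e2]
        rw [sub_eq_sub_iff_add_eq_add]
        rw [show φ (x + y - z) + φ z = φ z + φ (x + y - z) from add_comm _ _]
        exact h5
    · rintro ⟨s, z, y⟩ _
      simp only [Prod.mk.injEq]
      first
      | refine ⟨by abel, rfl, rfl⟩
      | simp
      | (try simp); abel
    · rintro ⟨x, y, z⟩ _
      simp only [Prod.mk.injEq]
      first
      | refine ⟨by abel, rfl, rfl⟩
      | simp
      | (try simp); abel
      
  -- fiberwise count over s
  set Q : G₁ → Finset (G₁ × G₁) := fun s => Finset.univ.filter (fun w => pred' (s, w.1, w.2))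
    with hQdef
  have hfib : T'.card = ∑ s ∈ Finset.univ, (Q s).card := by
    rw [Finset.card_eq_sum_card_fiberwise (f := fun t : G₁ × G₁ × G₁ => t.1)
      (fun t _ => Finset.mem_univ t.1)]
    refine Finset.sum_congr rfl (fun s _ => ?_)
    have himg : T'.filter (fun t => t.1 = s) = (Q s).image (fun w => (s, w.1, w.2)) := by
      ext ⟨a, b, c⟩
      simp only [hT'def, hQdef, Finset.mem_filter, Finset.mem_image, Finset.mem_univ,
        true_and, Prod.mk.injEq, Prod.exists]
      constructor
      · rintro ⟨hp, rfl⟩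
        exact ⟨b, c, hp, rfl, rfl, rfl⟩
      · rintro ⟨b', c', hp, rfl, rfl, rfl⟩
        exact ⟨hp, rfl⟩
    rw [himg, Finset.card_image_of_injective]
    rintro ⟨a, b⟩ ⟨a', b'⟩ h
    simp only [Prod.mk.injEq] at h
    exact Prod.ext h.2.1 h.2.2
  -- the fiber counts
  set a : G₁ → G₂ → ℕ := fun s v =>
    (Finset.univ.filter (fun z => z ∈ A ∧ z + s ∈ A ∧ φ (z + s) - φ z = v)).card with hadef
  have hg : ∀ s : G₁, ∃ v : G₂, ∀ v', a s v' ≤ a s v := by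
    intro s
    obtain ⟨v, -, hv⟩ := Finset.exists_max_image Finset.univ (a s) ⟨0, Finset.mem_univ 0⟩
    exact ⟨v, fun v' => hv v' (Finset.mem_univ _)⟩
  choose g hgmax using hg
  have haN : ∀ s v, a s v ≤ N := by
    intro s v
    rw [hadef]
    exact (Finset.card_filter_le _ _).trans_eq (by rw [Finset.card_univ])
  -- P s ≤ N * a s (g s)
  have hPle : ∀ s : G₁, (Q s).card ≤ N * a s (g s) := by
    intro s
    rw [Finset.card_eq_sum_card_fiberwise (f := fun w : G₁ × G₁ => w.2)
      (fun w _ => Finset.mem_univ w.2)]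
    have hb : ∀ y : G₁, ((Q s).filter (fun w => w.2 = y)).card ≤ a s (g s) := by
      intro y
      have hstep : ((Q s).filter (fun w => w.2 = y)).card ≤
          (Finset.univ.filter (fun z => z ∈ A ∧ z + s ∈ A ∧
            φ (z + s) - φ z = φ (y + s) - φ y)).card := by
        apply Finset.card_le_card_of_injOn (fun w => w.1)
        · rintro ⟨z, y'⟩ hw
          simp only [Finset.mem_coe, hQdef, hpred', Finset.mem_filter, Finset.mem_univ, true_and] at hw
          obtain ⟨⟨h1, h2, h3, h4, h5⟩, rfl⟩ := hw
          simp only [Finset.mem_coe, Finset.mem_filter, Finset.mem_univ, true_and]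
          exact ⟨h1, h2, h5⟩
        · rintro ⟨z, y'⟩ hw ⟨z2, y2⟩ hw2 h
          simp only [Finset.mem_coe, Finset.mem_filter] at hw hw2
          simp only at h
          exact Prod.ext h (hw.2.trans hw2.2.symm)
      have heq : (Finset.univ.filter (fun z => z ∈ A ∧ z + s ∈ A ∧
          φ (z + s) - φ z = φ (y + s) - φ y)).card = a s (φ (y + s) - φ y) := by
        rw [hadef]
      exact hstep.trans (heq ▸ hgmax s (φ (y + s) - φ y))
    calc ∑ y ∈ Finset.univ, ((Q s).filter (fun w => w.2 = y)).card
        ≤ ∑ _y ∈ (Finset.univ : Finset G₁), a s (g s) := Finset.sum_le_sum (fun y _ => hb y)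
      _ = N * a s (g s) := by rw [Finset.sum_const, Finset.card_univ, smul_eq_mul]
  -- sum of maxima is large
  have hsum_a : (1 - ε) * (N:ℝ)^2 ≤ ∑ s ∈ Finset.univ, (a s (g s) : ℝ) := by
    have h1 : (1 - ε) * (N:ℝ)^3 ≤ ∑ s ∈ Finset.univ, ((Q s).card : ℝ) := by
      have h0 := hT
      rw [← hTT', hfib] at h0
      push_cast at h0
      exact h0
    have h2 : ∑ s ∈ Finset.univ, ((Q s).card : ℝ) ≤
        ∑ s ∈ Finset.univ, (N:ℝ) * (a s (g s) : ℝ) := by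
      refine Finset.sum_le_sum (fun s _ => ?_)
      exact_mod_cast hPle s
    rw [← Finset.mul_sum] at h2
    have h3 : (N:ℝ) * ((1 - ε) * (N:ℝ)^2) ≤ (N:ℝ) * ∑ s ∈ Finset.univ, (a s (g s) : ℝ) := by
      calc (N:ℝ) * ((1 - ε) * (N:ℝ)^2) = (1 - ε) * (N:ℝ)^3 := by ring
        _ ≤ _ := le_trans h1 h2
    exact le_of_mul_le_mul_left h3 hN0R
  -- the set D of good differences
  set D : Finset G₁ := Finset.univ.filter (fun s => (1 - β) * (N:ℝ) ≤ (a s (g s) : ℝ)) with hDdef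
  have hterm_nonneg : ∀ s : G₁, (0:ℝ) ≤ (N:ℝ) - (a s (g s) : ℝ) := by
    intro s
    have h0 := haN s (g s)
    have h0' : ((a s (g s) : ℕ) : ℝ) ≤ (N : ℝ) := by exact_mod_cast h0
    linarith
  have hsum_def : ∑ s ∈ Finset.univ, ((N:ℝ) - (a s (g s) : ℝ)) ≤ ε * (N:ℝ)^2 := by
    rw [Finset.sum_sub_distrib, Finset.sum_const, Finset.card_univ]
    have he : ((N : ℕ) : ℝ) * (N:ℝ) = (N:ℝ)^2 := by ring
    rw [nsmul_eq_mul, he]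
    nlinarith [hsum_a]
  have hDc : (((Finset.univ \ D).card : ℕ) : ℝ) ≤ β * N := by
    by_cases hb : β = 0
    · have hε0' : ε = 0 := by nlinarith
      have hzero : ∀ s ∈ Finset.univ, ((N:ℝ) - (a s (g s) : ℝ)) = 0 := by
        rw [← Finset.sum_eq_zero_iff_of_nonneg (fun s _ => hterm_nonneg s)]
        have h1 : ∑ s ∈ Finset.univ, ((N:ℝ) - (a s (g s) : ℝ)) ≤ 0 := by
          rw [hε0'] at hsum_def; linarith [hsum_def]
        have h2 : (0:ℝ) ≤ ∑ s ∈ Finset.univ, ((N:ℝ) - (a s (g s) : ℝ)) :=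
          Finset.sum_nonneg (fun s _ => hterm_nonneg s)
        linarith
      have hem : Finset.univ \ D = ∅ := by
        rw [Finset.eq_empty_iff_forall_notMem]
        intro s hs
        rw [Finset.mem_sdiff, hDdef, Finset.mem_filter] at hs
        have h4 := hzero s (Finset.mem_univ s)
        have h5 : ¬ ((1 - β) * (N:ℝ) ≤ (a s (g s) : ℝ)) := fun hc => hs.2 ⟨Finset.mem_univ s, hc⟩
        rw [hb] at h5
        push_neg at h5
        nlinarith
      rw [hem, hb]
      simp
    · have hbpos : 0 < β := lt_of_le_of_ne hβ0 (Ne.symm hb)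
      have h1 : ((Finset.univ \ D).card : ℝ) * (β * N) ≤
          ∑ s ∈ Finset.univ \ D, ((N:ℝ) - (a s (g s) : ℝ)) := by
        have h0 := Finset.card_nsmul_le_sum (Finset.univ \ D)
          (fun s => (N:ℝ) - (a s (g s) : ℝ)) (β * N) ?_
        · rwa [nsmul_eq_mul] at h0
        · intro s hs
          rw [Finset.mem_sdiff, hDdef, Finset.mem_filter] at hs
          have h5 : ¬ ((1 - β) * (N:ℝ) ≤ (a s (g s) : ℝ)) := fun hc => hs.2 ⟨Finset.mem_univ s, hc⟩
          push_neg at h5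
          nlinarith
      have h2 : ∑ s ∈ Finset.univ \ D, ((N:ℝ) - (a s (g s) : ℝ)) ≤
          ∑ s ∈ Finset.univ, ((N:ℝ) - (a s (g s) : ℝ)) :=
        Finset.sum_le_sum_of_subset_of_nonneg (Finset.subset_univ _)
          (fun s _ _ => hterm_nonneg s)
      have h3 : ((Finset.univ \ D).card : ℝ) * (β * N) ≤ β^2 * (N:ℝ)^2 := by
        rw [hβsq]; linarith
      have h4 : ((Finset.univ \ D).card : ℝ) * (β * N) ≤ (β * N) * (β * N) := by
        have he : β^2 * (N:ℝ)^2 = (β * N) * (β * N) := by ring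
        linarith [h3]
      exact le_of_mul_le_mul_right h4 (mul_pos hbpos hN0R)
  have hDcard : (1 - β) * (N:ℝ) ≤ (D.card : ℝ) := by
    have h1 : (Finset.univ \ D).card = N - D.card := by
      rw [Finset.card_sdiff_of_subset (Finset.subset_univ _), Finset.card_univ]
    have h2 : D.card ≤ N :=
      le_trans (Finset.card_le_univ _) (le_of_eq Finset.card_univ)
    have h3 : ((Finset.univ \ D).card : ℝ) = (N:ℝ) - (D.card : ℝ) := by
      rw [h1]
      rw [Nat.cast_sub h2]
    rw [h3] at hDc
    linarith
  -- the level sets S s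
  set S : G₁ → Finset G₁ := fun s =>
    Finset.univ.filter (fun z => z ∈ A ∧ z + s ∈ A ∧ φ (z + s) - φ z = g s) with hSdef
  have hScard : ∀ s, (S s).card = a s (g s) := fun s => rfl
  have hSD : ∀ s ∈ D, (1 - β) * (N:ℝ) ≤ ((S s).card : ℝ) := by
    intro s hs
    rw [hDdef, Finset.mem_filter] at hs
    rw [hScard]
    exact hs.2
  have hSmem : ∀ s z, z ∈ S s → z ∈ A ∧ z + s ∈ A ∧ φ (z + s) = φ z + g s := by
    intro s z hz
    rw [hSdef] at hz
    simp only [Finset.mem_filter, Finset.mem_univ, true_and] at hz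
    exact ⟨hz.1, hz.2.1, by rw [← hz.2.2]; abel⟩
  -- intersection lemmas
  have hinter2 : ∀ X Y : Finset G₁, (X.card:ℝ) + (Y.card:ℝ) - (N:ℝ) ≤ ((X ∩ Y).card:ℝ) := by
    intro X Y
    have h := Finset.card_union_add_card_inter X Y
    have h2 : (X ∪ Y).card ≤ N :=
      le_trans (Finset.card_le_univ _) (le_of_eq Finset.card_univ)
    have h' : ((X ∪ Y).card : ℝ) + ((X ∩ Y).card : ℝ) = (X.card:ℝ) + (Y.card:ℝ) := by
      exact_mod_cast congrArg (Nat.cast : ℕ → ℝ) h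
    have h2' : ((X ∪ Y).card : ℝ) ≤ (N:ℝ) := by exact_mod_cast h2
    linarith
  have hne2 : ∀ X Y : Finset G₁, (N:ℝ) < (X.card:ℝ) + (Y.card:ℝ) →
      ∃ z, z ∈ X ∧ z ∈ Y := by
    intro X Y h
    have h1 := hinter2 X Y
    have h2 : (0:ℝ) < ((X ∩ Y).card:ℝ) := by linarith
    have h3 : 0 < (X ∩ Y).card := by exact_mod_cast h2
    obtain ⟨z, hz⟩ := Finset.card_pos.mp h3
    rw [Finset.mem_inter] at hz
    exact ⟨z, hz⟩
  have hne3 : ∀ X Y Z : Finset G₁, 2*(N:ℝ) < (X.card:ℝ) + (Y.card:ℝ) + (Z.card:ℝ) →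
      ∃ z, z ∈ X ∧ z ∈ Y ∧ z ∈ Z := by
    intro X Y Z h
    have h1 := hinter2 X Y
    obtain ⟨z, hz1, hz2⟩ := hne2 (X ∩ Y) Z (by linarith)
    rw [Finset.mem_inter] at hz1
    exact ⟨z, hz1.1, hz1.2, hz2⟩
  -- translates
  set sh : G₁ → Finset G₁ → Finset G₁ := fun t X => X.image (fun z => z - t) with hshdef
  have hshcard : ∀ t X, (sh t X).card = X.card := by
    intro t X
    exact Finset.card_image_of_injective _ (sub_left_injective)
  have hshmem : ∀ t X z, z ∈ sh t X ↔ z + t ∈ X := by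
    intro t X z
    rw [hshdef]
    simp only [Finset.mem_image]
    constructor
    · rintro ⟨w, hw, rfl⟩
      rwa [sub_add_cancel]
    · intro h
      exact ⟨z + t, h, by abel⟩
  -- decomposition of an arbitrary element as a sum of two elements of D
  have hdecomp : ∀ x : G₁, ∃ s, s ∈ D ∧ x - s ∈ D := by
    intro x
    have hcim : ((D.image (fun u => x - u)).card : ℝ) = (D.card : ℝ) := by
      rw [Finset.card_image_of_injective _ sub_right_injective]
    obtain ⟨z, hz1, hz2⟩ := hne2 D (D.image (fun u => x - u)) (by rw [hcim]; nlinarith)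
    rw [Finset.mem_image] at hz2
    obtain ⟨u, hu, rfl⟩ := hz2
    refine ⟨x - u, hz1, ?_⟩
    rwa [sub_sub_cancel]
  choose σ hσ using hdecomp
  have hσD : ∀ x, σ x ∈ D := fun x => (hσ x).1
  have hτD : ∀ x, x - σ x ∈ D := fun x => (hσ x).2
  -- the candidate linear map
  set L₀ : G₁ → G₂ := fun x => g (σ x) + g (x - σ x) with hL₀def
  set W : G₁ → Finset G₁ := fun x => sh (x - σ x) (S (σ x)) ∩ S (x - σ x) with hWdef
  have hWcard : ∀ x, (1 - 2*β) * (N:ℝ) ≤ ((W x).card : ℝ) := by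
    intro x
    have h1 := hinter2 (sh (x - σ x) (S (σ x))) (S (x - σ x))
    rw [hshcard] at h1
    have h2 := hSD _ (hσD x)
    have h3 := hSD _ (hτD x)
    rw [hWdef]
    dsimp only
    nlinarith
  have hWφ : ∀ x z, z ∈ W x → φ (z + x) = φ z + L₀ x := by
    intro x z hz
    rw [hWdef] at hz
    simp only [Finset.mem_inter] at hz
    obtain ⟨hz1, hz2⟩ := hz
    rw [hshmem] at hz1
    obtain ⟨-, -, e1⟩ := hSmem _ _ hz1
    obtain ⟨-, -, e2⟩ := hSmem _ _ hz2
    have e3 : z + (x - σ x) + σ x = z + x := by abel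
    rw [e3] at e1
    rw [e1, e2, hL₀def]
    abel
  have hwd : ∀ x s t, s ∈ D → t ∈ D → s + t = x → g s + g t = L₀ x := by
    intro x s t hs ht hst
    obtain ⟨z, hz1, hz2, hz3⟩ := hne3 (W x) (sh t (S s)) (S t) (by
      have h1 := hWcard x
      have h2 := hSD s hs
      have h3 := hSD t ht
      rw [hshcard]
      nlinarith)
    rw [hshmem] at hz2
    obtain ⟨-, -, e1⟩ := hSmem _ _ hz2
    obtain ⟨-, -, e2⟩ := hSmem _ _ hz3
    have e3 := hWφ x z hz1
    have e4 : z + t + s = z + x := by rw [← hst]; abel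
    rw [e4] at e1
    rw [e3, e2] at e1
    have e5 : φ z + (g s + g t) = φ z + L₀ x := by rw [e1]; abel
    exact add_left_cancel e5
  have haddL : ∀ x y, L₀ (x + y) = L₀ x + L₀ y := by
    intro x y
    obtain ⟨z, hz1, hz2, hz3⟩ := hne3 (W (x + y)) (W x) (sh x (W y)) (by
      have h1 := hWcard (x + y)
      have h2 := hWcard x
      have h3 := hWcard y
      rw [hshcard]
      nlinarith)
    rw [hshmem] at hz3
    have e1 := hWφ _ _ hz1
    have e2 := hWφ _ _ hz2
    have e3 := hWφ _ _ hz3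
    have e4 : z + x + y = z + (x + y) := by abel
    rw [e4, e1, e2] at e3
    have e5 : φ z + L₀ (x + y) = φ z + (L₀ x + L₀ y) := by rw [e3]; abel
    exact add_left_cancel e5
  have hDg2 : ∀ s ∈ D, L₀ s = g s := by
    intro s hs
    obtain ⟨z, hz1, hz2⟩ := hne2 (W s) (S s) (by
      have h1 := hWcard s
      have h2 := hSD s hs
      nlinarith)
    have e1 := hWφ _ _ hz1
    obtain ⟨-, -, e2⟩ := hSmem _ _ hz2
    rw [e2] at e1
    exact (add_left_cancel e1).symm
  -- build the linear map
  set f : G₁ →+ G₂ := AddMonoidHom.mk' L₀ haddL with hfdef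
  set L : G₁ →ₗ[ZMod p] G₂ := AddMonoidHom.toZModLinearMap p f with hLdef
  have hLapp : ∀ x, L x = L₀ x := fun x => rfl
  -- find a good base point z₀ by double counting
  set cnt : G₁ → ℕ := fun z => (D.filter (fun s => z ∈ S s)).card with hcntdef
  have hswap : ∑ z ∈ Finset.univ, (cnt z : ℝ) = ∑ s ∈ D, ((S s).card : ℝ) := by
    have h1 : ∀ z, (cnt z : ℝ) = ∑ s ∈ D, (if z ∈ S s then (1:ℝ) else 0) := by
      intro z
      rw [hcntdef]
      dsimp only
      rw [Finset.card_filter]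
      push_cast
      rfl
    have h2 : ∀ s, ((S s).card : ℝ) = ∑ z ∈ Finset.univ, (if z ∈ S s then (1:ℝ) else 0) := by
      intro s
      rw [Finset.sum_ite_mem, Finset.univ_inter, Finset.sum_const, nsmul_eq_mul, mul_one]
    simp only [h1]
    rw [Finset.sum_comm]
    exact Finset.sum_congr rfl (fun s _ => (h2 s).symm)
  have hz₀ : ∃ z₀ : G₁, (1 - 2*β) * (N:ℝ) ≤ (cnt z₀ : ℝ) := by
    by_contra hcon
    push_neg at hcon
    have h1 : ∑ z ∈ Finset.univ, (cnt z : ℝ) <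
        ∑ _z ∈ (Finset.univ : Finset G₁), (1 - 2*β) * (N:ℝ) :=
      Finset.sum_lt_sum_of_nonempty ⟨(0:G₁), Finset.mem_univ (0:G₁)⟩ (fun z _ => hcon z)
    rw [Finset.sum_const, Finset.card_univ, nsmul_eq_mul] at h1
    have h2 : ∑ _s ∈ D, ((1 - β) * (N:ℝ)) ≤ ∑ s ∈ D, ((S s).card : ℝ) :=
      Finset.sum_le_sum (fun s hs => hSD s hs)
    rw [Finset.sum_const, nsmul_eq_mul] at h2
    rw [hswap] at h1
    have hβ1 : (0:ℝ) ≤ 1 - β := by nlinarith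
    have hmul : ((1-β)*(N:ℝ)) * ((1-β)*(N:ℝ)) ≤ (D.card:ℝ) * ((1-β)*(N:ℝ)) :=
      mul_le_mul_of_nonneg_right hDcard (mul_nonneg hβ1 (le_of_lt hN0R))
    nlinarith [hmul, h1, h2, mul_nonneg (mul_nonneg hβ0 hβ0) (le_of_lt (mul_pos hN0R hN0R))]
  obtain ⟨z₀, hz₀⟩ := hz₀
  refine ⟨L, φ z₀ - L₀ z₀, ?_⟩
  rw [hsetcard1, Finset.filter_congr_decidable]
  -- the agreement set contains the image of the good shifts
  set E : Finset G₁ := (D.filter (fun s => z₀ ∈ S s)).image (fun s => z₀ + s) with hEdef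
  have hEcard : (E.card : ℝ) = (cnt z₀ : ℝ) := by
    rw [hEdef, Finset.card_image_of_injective _ (add_right_injective z₀), hcntdef]
  have hEsub : E ⊆ Finset.univ.filter (fun x => x ∈ A ∧ L x + (φ z₀ - L₀ z₀) = φ x) := by
    intro x hx
    rw [hEdef, Finset.mem_image] at hx
    obtain ⟨s, hs, rfl⟩ := hx
    rw [Finset.mem_filter] at hs
    obtain ⟨hsD, hsS⟩ := hs
    obtain ⟨h1, h2, h3⟩ := hSmem _ _ hsS
    rw [Finset.mem_filter]
    refine ⟨Finset.mem_univ _, h2, ?_⟩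
    rw [hLapp, haddL, hDg2 s hsD, h3]
    abel
  have hcard_le : (cnt z₀ : ℝ) ≤
      ((Finset.univ.filter (fun x => x ∈ A ∧ L x + (φ z₀ - L₀ z₀) = φ x)).card : ℝ) := by
    rw [← hEcard]
    exact_mod_cast Finset.card_le_card hEsub
  -- final numerics
  set q : ℝ := ε ^ ((1:ℝ)/4) with hqdef
  have hq0 : 0 ≤ q := Real.rpow_nonneg hε0 _
  have hq1 : q ≤ 1 := Real.rpow_le_one hε0 hε1 (by norm_num)
  have hq2 : q^2 = β := by
    rw [hqdef, hβdef, ← Real.rpow_natCast (ε ^ ((1:ℝ)/4)) 2, ← Real.rpow_mul hε0,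
      Real.sqrt_eq_rpow]
    norm_num
  have hfin : (1 - 5 * q) * (N:ℝ) ≤ (1 - 2*β) * (N:ℝ) := by nlinarith
  exact le_trans hfin (le_trans hz₀ hcard_le)
end

section
/- Let p be a prime, G and H finite-dimensional vector spaces over 𝔽_p, and let (V_x)_{x∈G} be a linear system of subspaces inside H. Let d be a nonnegative integer and ε > 0 be such that (i) |V_x| = p^d holds for at least (1 − ε)|G| elements x ∈ G, and (ii) V_{x₁} ∩ V_{x₂} = {0} holds for at least (1 − ε)|G|² pairs (x₁, x₂) ∈ G². Then for every integer r ≥ 1, the number of (r+1)-tuples (x₀, x₁, …, x_r) ∈ G^{r+1} for which V_{x₀} ∩ (V_{x₁} + ⋯ + V_{x_r}) ≠ {0} is at most (p^{rd}·√ε + rε)·|G|^{r+1}. -/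
open Finset

private lemma aux_card_sup {R M : Type} [Ring R] [AddCommGroup M] [Module R M] [Finite M]
    (A B : Submodule R M) : Nat.card ↥(A ⊔ B) ≤ Nat.card ↥A * Nat.card ↥B := by
  rw [← Nat.card_prod]
  apply Nat.card_le_card_of_surjective
    (f := fun q : A × B => (⟨q.1 + q.2, Submodule.add_mem_sup q.1.2 q.2.2⟩ : ↥(A ⊔ B)))
  rintro ⟨x, hx⟩
  rcases Submodule.mem_sup.1 hx with ⟨a, ha, b, hb, rfl⟩
  exact ⟨(⟨a, ha⟩, ⟨b, hb⟩), rfl⟩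

private lemma aux_card_finsetSup {R M ι : Type} [Ring R] [AddCommGroup M] [Module R M]
    [Finite M] [DecidableEq ι] (s : Finset ι) (f : ι → Submodule R M) :
    Nat.card ↥(s.sup f) ≤ ∏ i ∈ s, Nat.card ↥(f i) := by
  induction s using Finset.induction with
  | empty => simp
  | insert _ _ h ih =>
    rw [Finset.sup_insert, Finset.prod_insert h]
    exact le_trans (aux_card_sup _ _) (Nat.mul_le_mul_left _ ih)

private lemma aux_card_iSup {R M ι : Type} [Ring R] [AddCommGroup M] [Module R M]
    [Finite M] [Fintype ι] [DecidableEq ι] (f : ι → Submodule R M) :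
    Nat.card ↥(⨆ i, f i) ≤ ∏ i, Nat.card ↥(f i) := by
  have h : (⨆ i, f i) = Finset.univ.sup f := by
    rw [Finset.sup_eq_iSup]; simp
  rw [h]
  exact aux_card_finsetSup _ _

/-- The first observation in the proof of Proposition 11 of the paper: for a
quasirandom linear system of subspaces, `V_{x₀} ∩ (V_{x₁} + ⋯ + V_{x_r}) = {0}`
fails for at most `(p^{rd}√ε + rε)|G|^{r+1}` tuples `(x₀, x₁, …, x_r)`. -/
theorem linear_system_tuples_count
    (p : ℕ) [Fact p.Prime]
    (G H : Type) [AddCommGroup G] [AddCommGroup H]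
    [Module (ZMod p) G] [Module (ZMod p) H]
    [FiniteDimensional (ZMod p) G] [FiniteDimensional (ZMod p) H]
    [Finite G] [Finite H]
    (V : G → Submodule (ZMod p) H)
    (hV0 : V 0 = ⊥)
    (hVadd : ∀ x₁ x₂ : G, V (x₁ + x₂) ≤ V x₁ ⊔ V x₂)
    (d : ℕ) (ε : ℝ) (hε0 : 0 < ε)
    (hi : (Nat.card {x : G | Nat.card ↥(V x) = p ^ d} : ℝ) ≥
      (1 - ε) * Nat.card G)
    (hii : (Nat.card {q : G × G | V q.1 ⊓ V q.2 = ⊥} : ℝ) ≥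
      (1 - ε) * (Nat.card G : ℝ) ^ 2)
    (r : ℕ) (hr : 1 ≤ r) :
    (Nat.card {t : G × (Fin r → G) |
        V t.1 ⊓ (⨆ i : Fin r, V (t.2 i)) ≠ ⊥} : ℝ) ≤
      ((p : ℝ) ^ (r * d) * Real.sqrt ε + r * ε) * (Nat.card G : ℝ) ^ (r + 1) := by
  classical
  cases nonempty_fintype G
  cases nonempty_fintype H
  have hncard : (Nat.card G : ℝ) = (Fintype.card G : ℝ) := by rw [Nat.card_eq_fintype_card]
  set n : ℕ := Fintype.card G with hn
  have hn0 : (0:ℝ) ≤ (n : ℝ) := Nat.cast_nonneg n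
  have hε0' : (0:ℝ) ≤ ε := le_of_lt hε0
  have hsq0 : (0:ℝ) ≤ Real.sqrt ε := Real.sqrt_nonneg ε
  -- count of x with wrong card
  set bad : Finset G := univ.filter (fun x => ¬ (Nat.card ↥(V x) = p ^ d)) with hbaddef
  have hbad : (bad.card : ℝ) ≤ ε * n := by
    have h1 : (univ.filter (fun x => Nat.card ↥(V x) = p ^ d)).card + bad.card = n :=
      Finset.card_filter_add_card_filter_not _
    have h2 : (Nat.card {x : G | Nat.card ↥(V x) = p ^ d})
        = (univ.filter (fun x => Nat.card ↥(V x) = p ^ d)).card := by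
      rw [Nat.card_coe_set_eq, Set.ncard_eq_toFinset_card', Set.toFinset_setOf]
    rw [h2, hncard] at hi
    have h1' : ((univ.filter (fun x => Nat.card ↥(V x) = p ^ d)).card : ℝ) + (bad.card : ℝ)
        = (n : ℝ) := by exact_mod_cast congrArg (Nat.cast : ℕ → ℝ) h1
    nlinarith [hi, h1']
  -- count of bad pairs
  set BP : Finset (G × G) := univ.filter (fun q => ¬ (V q.1 ⊓ V q.2 = ⊥)) with hBPdef
  have hBP : (BP.card : ℝ) ≤ ε * (n:ℝ)^2 := by
    have h1 : (univ.filter (fun q : G × G => V q.1 ⊓ V q.2 = ⊥)).card + BP.card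
        = Fintype.card (G × G) :=
      Finset.card_filter_add_card_filter_not _
    have h2 : (Nat.card {q : G × G | V q.1 ⊓ V q.2 = ⊥})
        = (univ.filter (fun q : G × G => V q.1 ⊓ V q.2 = ⊥)).card := by
      rw [Nat.card_coe_set_eq, Set.ncard_eq_toFinset_card', Set.toFinset_setOf]
    rw [h2, hncard] at hii
    have hcp : (Fintype.card (G × G) : ℝ) = (n:ℝ)^2 := by
      rw [Fintype.card_prod]; push_cast; ring
    have h1' : ((univ.filter (fun q : G × G => V q.1 ⊓ V q.2 = ⊥)).card : ℝ) + (BP.card : ℝ)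
        = (n:ℝ)^2 := by
      rw [← hcp]; exact_mod_cast congrArg (Nat.cast : ℕ → ℝ) h1
    nlinarith [hii, h1']
  -- the sets S w
  set S : H → Finset G := fun w => univ.filter (fun x => w ∈ V x) with hSdef
  have hS : ∀ w : H, w ≠ 0 → ((S w).card : ℝ) ≤ Real.sqrt ε * n := by
    intro w hw
    have hsub : (S w) ×ˢ (S w) ⊆ BP := by
      intro q hq
      rw [Finset.mem_product] at hq
      simp only [hSdef, hBPdef, Finset.mem_filter, Finset.mem_univ, true_and] at hq ⊢
      intro hbot
      have hmem : w ∈ V q.1 ⊓ V q.2 := ⟨hq.1, hq.2⟩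
      rw [hbot] at hmem
      exact hw (by simpa using hmem)
    have hcard : ((S w).card : ℝ)^2 ≤ ε * (n:ℝ)^2 := by
      have := Finset.card_le_card hsub
      rw [Finset.card_product] at this
      calc ((S w).card : ℝ)^2 = (((S w).card * (S w).card : ℕ) : ℝ) := by push_cast; ring
        _ ≤ (BP.card : ℝ) := by exact_mod_cast this
        _ ≤ ε * (n:ℝ)^2 := hBP
    have := Real.sqrt_le_sqrt hcard
    rwa [Real.sqrt_sq (by positivity), Real.sqrt_mul hε0', Real.sqrt_sq hn0] at this
  -- card of the span subspace
  have hW : ∀ y : Fin r → G, (∀ i, y i ∉ bad) →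
      (Nat.card ↥(⨆ i : Fin r, V (y i)) : ℝ) ≤ (p:ℝ) ^ (r * d) := by
    intro y hy
    have hy' : ∀ i, Nat.card ↥(V (y i)) = p ^ d := by
      intro i
      have := hy i
      simp only [hbaddef, Finset.mem_filter, Finset.mem_univ, true_and, not_not] at this
      exact this
    have h1 : Nat.card ↥(⨆ i : Fin r, V (y i)) ≤ p ^ (r * d) := by
      calc Nat.card ↥(⨆ i : Fin r, V (y i)) ≤ ∏ i : Fin r, Nat.card ↥(V (y i)) :=
            aux_card_iSup _
        _ = p ^ (r * d) := by
            simp only [hy']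
            rw [Finset.prod_const, Finset.card_univ, Fintype.card_fin, ← pow_mul, mul_comm d r]
    exact_mod_cast h1
  -- per-(x₁,…,x_r) count of bad x₀
  have hX : ∀ y : Fin r → G, (∀ i, y i ∉ bad) →
      ((univ.filter (fun x => V x ⊓ (⨆ i : Fin r, V (y i)) ≠ ⊥)).card : ℝ) ≤
        (p:ℝ) ^ (r * d) * (Real.sqrt ε * n) := by
    intro y hy
    set Wm : Submodule (ZMod p) H := ⨆ i : Fin r, V (y i) with hWmdef
    set Wfin : Finset H := (Wm : Set H).toFinset with hWfindef
    have hsub : univ.filter (fun x => V x ⊓ Wm ≠ ⊥) ⊆ (Wfin.erase 0).biUnion S := by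
      intro x hx
      simp only [Finset.mem_filter, Finset.mem_univ, true_and] at hx
      obtain ⟨w, hwmem, hw0⟩ := (Submodule.ne_bot_iff _).1 hx
      have hw1 : w ∈ V x := hwmem.1
      have hw2 : w ∈ Wm := hwmem.2
      apply Finset.mem_biUnion.2
      refine ⟨w, Finset.mem_erase.2 ⟨hw0, Set.mem_toFinset.2 hw2⟩, ?_⟩
      simp only [hSdef, Finset.mem_filter, Finset.mem_univ, true_and]
      exact hw1
    have hcb : ((univ.filter (fun x => V x ⊓ Wm ≠ ⊥)).card : ℝ) ≤
        ∑ w ∈ Wfin.erase 0, ((S w).card : ℝ) := by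
      have := le_trans (Finset.card_le_card hsub) Finset.card_biUnion_le
      exact_mod_cast this
    have hsum : ∑ w ∈ Wfin.erase 0, ((S w).card : ℝ) ≤
        ((Wfin.erase 0).card : ℝ) * (Real.sqrt ε * n) := by
      have := Finset.sum_le_card_nsmul (Wfin.erase 0) (fun w => ((S w).card : ℝ))
        (Real.sqrt ε * n) (fun w hw => hS w (Finset.mem_erase.1 hw).1)
      simpa [nsmul_eq_mul] using this
    have hWfc : ((Wfin.erase 0).card : ℝ) ≤ (p:ℝ) ^ (r * d) := by
      have h1 : (Wfin.erase 0).card ≤ Wfin.card := Finset.card_erase_le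
      have h2 : Wfin.card = Nat.card ↥Wm := by
        rw [hWfindef, Set.toFinset_card, Nat.card_eq_fintype_card]
        exact Fintype.card_congr (Equiv.setCongr rfl)
      calc ((Wfin.erase 0).card : ℝ) ≤ (Wfin.card : ℝ) := by exact_mod_cast h1
        _ = (Nat.card ↥Wm : ℝ) := by rw [h2]
        _ ≤ (p:ℝ) ^ (r * d) := hW y hy
    calc ((univ.filter (fun x => V x ⊓ Wm ≠ ⊥)).card : ℝ)
        ≤ ((Wfin.erase 0).card : ℝ) * (Real.sqrt ε * n) := le_trans hcb hsum
      _ ≤ (p:ℝ) ^ (r * d) * (Real.sqrt ε * n) := by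
          apply mul_le_mul_of_nonneg_right hWfc (by positivity)
  -- the main tuple set
  set T : Finset (G × (Fin r → G)) :=
    univ.filter (fun t => V t.1 ⊓ (⨆ i : Fin r, V (t.2 i)) ≠ ⊥) with hTdef
  have hgoal : (Nat.card {t : G × (Fin r → G) |
      V t.1 ⊓ (⨆ i : Fin r, V (t.2 i)) ≠ ⊥}) = T.card := by
    rw [Nat.card_coe_set_eq, Set.ncard_eq_toFinset_card', Set.toFinset_setOf]
  set T₁ : Finset (G × (Fin r → G)) :=
    univ.filter (fun t => ∃ i, t.2 i ∈ bad) with hT1def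
  set T₂ : Finset (G × (Fin r → G)) :=
    univ.filter (fun t => (∀ i, t.2 i ∉ bad) ∧ V t.1 ⊓ (⨆ i : Fin r, V (t.2 i)) ≠ ⊥)
    with hT2def
  have hsplit : T ⊆ T₁ ∪ T₂ := by
    intro t ht
    simp only [hTdef, hT1def, hT2def, Finset.mem_filter, Finset.mem_univ, true_and,
      Finset.mem_union] at ht ⊢
    by_cases h : ∀ i, t.2 i ∉ bad
    · exact Or.inr ⟨h, ht⟩
    · push_neg at h
      exact Or.inl (by simpa using h)
  -- bound on T₂
  set GY : Finset (Fin r → G) := univ.filter (fun y => ∀ i, y i ∉ bad) with hGYdef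
  have hT2bound : (T₂.card : ℝ) ≤ (p:ℝ) ^ (r * d) * Real.sqrt ε * (n:ℝ) ^ (r + 1) := by
    have hsub2 : T₂ ⊆ GY.biUnion (fun y =>
        (univ.filter (fun x => V x ⊓ (⨆ i : Fin r, V (y i)) ≠ ⊥)).image (fun x => (x, y))) := by
      intro t ht
      simp only [hT2def, Finset.mem_filter, Finset.mem_univ, true_and] at ht
      apply Finset.mem_biUnion.2
      refine ⟨t.2, ?_, ?_⟩
      · simp only [hGYdef, Finset.mem_filter, Finset.mem_univ, true_and]
        exact ht.1
      · apply Finset.mem_image.2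
        refine ⟨t.1, ?_, ?_⟩
        · simp only [Finset.mem_filter, Finset.mem_univ, true_and]
          exact ht.2
        · exact Prod.mk.eta
    have hc1 : (T₂.card : ℝ) ≤ ∑ y ∈ GY,
        ((univ.filter (fun x => V x ⊓ (⨆ i : Fin r, V (y i)) ≠ ⊥)).card : ℝ) := by
      have h1 := le_trans (Finset.card_le_card hsub2) Finset.card_biUnion_le
      have h2 : ∑ y ∈ GY,
          ((univ.filter (fun x => V x ⊓ (⨆ i : Fin r, V (y i)) ≠ ⊥)).image (fun x => (x, y))).card
          ≤ ∑ y ∈ GY, (univ.filter (fun x => V x ⊓ (⨆ i : Fin r, V (y i)) ≠ ⊥)).card :=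
        Finset.sum_le_sum (fun y _ => Finset.card_image_le)
      exact_mod_cast le_trans h1 h2
    have hc2 : ∑ y ∈ GY,
        ((univ.filter (fun x => V x ⊓ (⨆ i : Fin r, V (y i)) ≠ ⊥)).card : ℝ)
        ≤ (GY.card : ℝ) * ((p:ℝ) ^ (r * d) * (Real.sqrt ε * n)) := by
      have := Finset.sum_le_card_nsmul GY
        (fun y => ((univ.filter (fun x => V x ⊓ (⨆ i : Fin r, V (y i)) ≠ ⊥)).card : ℝ))
        ((p:ℝ) ^ (r * d) * (Real.sqrt ε * n))
        (fun y hy => hX y (by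
          simpa only [hGYdef, Finset.mem_filter, Finset.mem_univ, true_and] using hy))
      simpa [nsmul_eq_mul] using this
    have hGY : (GY.card : ℝ) ≤ (n:ℝ) ^ r := by
      have : GY.card ≤ Fintype.card (Fin r → G) := by
        rw [← Finset.card_univ]; exact Finset.card_le_card (Finset.subset_univ _)
      have h2 : Fintype.card (Fin r → G) = n ^ r := by
        rw [Fintype.card_fun, Fintype.card_fin]
      rw [h2] at this
      exact_mod_cast this
    calc (T₂.card : ℝ) ≤ (GY.card : ℝ) * ((p:ℝ) ^ (r * d) * (Real.sqrt ε * n)) :=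
          le_trans hc1 hc2
      _ ≤ (n:ℝ) ^ r * ((p:ℝ) ^ (r * d) * (Real.sqrt ε * n)) := by
          apply mul_le_mul_of_nonneg_right hGY (by positivity)
      _ = (p:ℝ) ^ (r * d) * Real.sqrt ε * (n:ℝ) ^ (r + 1) := by
          rw [pow_succ]; ring
  -- bound on T₁
  have hT1bound : (T₁.card : ℝ) ≤ (r : ℝ) * (ε * (n:ℝ) ^ (r + 1)) := by
    have hper : ∀ i : Fin r,
        ((univ.filter (fun t : G × (Fin r → G) => t.2 i ∈ bad)).card : ℝ)
          ≤ ε * (n:ℝ) ^ (r + 1) := by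
      intro i
      have hinj : (univ.filter (fun t : G × (Fin r → G) => t.2 i ∈ bad)).card ≤
          (bad ×ˢ (univ : Finset (G × ({j : Fin r // j ≠ i} → G)))).card := by
        apply Finset.card_le_card_of_injOn
          (fun t => (t.2 i, (t.1, fun j => t.2 j.1)))
        · intro t ht
          rw [Finset.mem_coe] at ht; rw [Finset.mem_coe, Finset.mem_product]
          exact ⟨(Finset.mem_filter.1 ht).2, Finset.mem_univ _⟩
        · intro a _ b _ hab
          simp only [Prod.mk.injEq] at hab
          obtain ⟨h1, h2, h3⟩ := hab
          have h4 : a.2 = b.2 := by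
            funext j
            by_cases hj : j = i
            · subst hj; exact h1
            · exact congrFun h3 ⟨j, hj⟩
          exact Prod.ext h2 h4
      have hcardprod : (bad ×ˢ (univ : Finset (G × ({j : Fin r // j ≠ i} → G)))).card
          = bad.card * (n * n ^ (r - 1)) := by
        rw [Finset.card_product, Finset.card_univ, Fintype.card_prod, Fintype.card_fun]
        congr 2
        simp [Fintype.card_subtype_compl]
        rfl
      have hpow : n * n ^ (r - 1) = n ^ r := by
        conv_rhs => rw [show r = (r - 1) + 1 by omega]
        rw [pow_succ]; ring
      rw [hpow] at hcardprod
      rw [hcardprod] at hinj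
      calc ((univ.filter (fun t : G × (Fin r → G) => t.2 i ∈ bad)).card : ℝ)
          ≤ (bad.card : ℝ) * (n:ℝ) ^ r := by exact_mod_cast hinj
        _ ≤ (ε * n) * (n:ℝ) ^ r := by
            apply mul_le_mul_of_nonneg_right hbad (by positivity)
        _ = ε * (n:ℝ) ^ (r + 1) := by rw [pow_succ]; ring
    have hsub1 : T₁ ⊆ (univ : Finset (Fin r)).biUnion
        (fun i => univ.filter (fun t : G × (Fin r → G) => t.2 i ∈ bad)) := by
      intro t ht
      simp only [hT1def, Finset.mem_filter, Finset.mem_univ, true_and] at ht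
      obtain ⟨i, hi'⟩ := ht
      exact Finset.mem_biUnion.2 ⟨i, Finset.mem_univ _,
        Finset.mem_filter.2 ⟨Finset.mem_univ _, hi'⟩⟩
    have hc1 : (T₁.card : ℝ) ≤ ∑ i : Fin r,
        ((univ.filter (fun t : G × (Fin r → G) => t.2 i ∈ bad)).card : ℝ) := by
      have := le_trans (Finset.card_le_card hsub1) Finset.card_biUnion_le
      exact_mod_cast this
    calc (T₁.card : ℝ) ≤ ∑ i : Fin r,
          ((univ.filter (fun t : G × (Fin r → G) => t.2 i ∈ bad)).card : ℝ) := hc1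
      _ ≤ ∑ _i : Fin r, (ε * (n:ℝ) ^ (r + 1)) := Finset.sum_le_sum (fun i _ => hper i)
      _ = (r : ℝ) * (ε * (n:ℝ) ^ (r + 1)) := by
          rw [Finset.sum_const, Finset.card_univ, Fintype.card_fin, nsmul_eq_mul]
  -- finish
  rw [hgoal, hncard]
  have hcard : (T.card : ℝ) ≤ (T₁.card : ℝ) + (T₂.card : ℝ) := by
    have := le_trans (Finset.card_le_card hsplit) (Finset.card_union_le _ _)
    exact_mod_cast this
  have hfinal : ((p : ℝ) ^ (r * d) * Real.sqrt ε + (r : ℝ) * ε) * (n : ℝ) ^ (r + 1)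
      = (r : ℝ) * (ε * (n:ℝ) ^ (r + 1)) + (p:ℝ) ^ (r * d) * Real.sqrt ε * (n:ℝ) ^ (r + 1) := by
    ring
  rw [hfinal]
  linarith [hT1bound, hT2bound, hcard]
end

section
/- Let p be a prime, G and H finite-dimensional vector spaces over 𝔽_p, and let (V_x)_{x∈G} be a linear system of subspaces inside H. Let d be a nonnegative integer and ε > 0 be such that (i) |V_x| = p^d holds for at least (1 − ε)|G| elements x ∈ G, and (ii) V_{x₁} ∩ V_{x₂} = {0} holds for at least (1 − ε)|G|² pairs (x₁, x₂) ∈ G². Set ε′ = p^{4d}·√ε + 4ε. Then for all but at most 8ε′·|G|⁴ quadruples (a, x, y, z) ∈ G⁴ the following all hold: |V_a| = |V_x| = |V_y| = |V_{x+y−a}| = |V_z| = p^d; |V_a + V_x + V_y| = p^{3d}; and V_{x+y−a} ∩ (V_x + V_y + V_z) = {0}. -/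
open Finset
theorem cs_shift {H : Type} [AddCommGroup H] [Fintype H] (g : H → ℕ) (c : H) :
    ∑ w, g w * g (c + w) ≤ ∑ w, g w * g w := by
  refine Nat.le_of_mul_le_mul_left ?_ (show 0 < 2 by norm_num)
  calc 2 * ∑ w, g w * g (c + w) = ∑ w, 2 * (g w * g (c + w)) := by rw [Finset.mul_sum]
  _ ≤ ∑ w, (g w * g w + g (c + w) * g (c + w)) := by
      refine Finset.sum_le_sum fun w _ => ?_
      zify; nlinarith [sq_nonneg ((g w : ℤ) - g (c + w))]
  _ = ∑ w, g w * g w + ∑ w, g (c + w) * g (c + w) := Finset.sum_add_distrib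
  _ = 2 * ∑ w, g w * g w := by
      rw [two_mul]; congr 1
      exact Fintype.sum_equiv (Equiv.addLeft c) _ _ (fun w => rfl)

theorem SB_bound {H : Type} [AddCommGroup H] [Fintype H] [DecidableEq H] (F g : H → ℕ) (M : ℕ)
    (hFg : ∀ u, F u = (if u = 0 then M else 0) + g u) (c : H) :
    ∑ u, ∑ w, F u * F w * g (c + (u + w)) ≤
      M * M * g c + 2 * (M * ∑ w, g w * g w) + (∑ w, g w) * (∑ w, g w * g w) := by
  have key : ∀ u w : H, F u * F w * g (c + (u + w)) =
      (if u = 0 then M else 0) * ((if w = 0 then M else 0) * g (c + (u + w)))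
      + (if u = 0 then M else 0) * (g w * g (c + (u + w)))
      + g u * ((if w = 0 then M else 0) * g (c + (u + w)))
      + g u * (g w * g (c + (u + w))) := by
    intro u w; rw [hFg u, hFg w]; ring
  simp only [key, Finset.sum_add_distrib]
  have t1 : ∑ u : H, ∑ w : H, (if u = 0 then M else 0) * ((if w = 0 then M else 0) * g (c + (u + w)))
      = M * M * g c := by
    simp [ite_mul, zero_mul, Finset.sum_ite_eq', Finset.mem_univ, mul_assoc]
  have t2 : ∑ u : H, ∑ w : H, (if u = 0 then M else 0) * (g w * g (c + (u + w)))
      ≤ M * ∑ w, g w * g w := by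
    have h1 : ∀ u : H, ∑ w : H, (if u = 0 then M else 0) * (g w * g (c + (u + w)))
        = if u = 0 then M * ∑ w, g w * g (c + w) else 0 := by
      intro u; split_ifs with h <;> simp [h, Finset.mul_sum]
    simp only [h1, Finset.sum_ite_eq', Finset.mem_univ, if_true]
    exact Nat.mul_le_mul_left M (cs_shift g c)
  have t3 : ∑ u : H, ∑ w : H, g u * ((if w = 0 then M else 0) * g (c + (u + w)))
      ≤ M * ∑ w, g w * g w := by
    have h1 : ∀ u : H, ∑ w : H, g u * ((if w = 0 then M else 0) * g (c + (u + w)))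
        = M * (g u * g (c + u)) := by
      intro u
      simp [mul_ite, ite_mul, zero_mul, mul_zero, Finset.sum_ite_eq', Finset.mem_univ]
      ring
    simp only [h1]
    rw [← Finset.mul_sum]
    exact Nat.mul_le_mul_left M (cs_shift g c)
  have t4 : ∑ u : H, ∑ w : H, g u * (g w * g (c + (u + w)))
      ≤ (∑ w, g w) * (∑ w, g w * g w) := by
    rw [Finset.sum_mul]
    refine Finset.sum_le_sum fun u _ => ?_
    rw [← Finset.mul_sum]
    refine Nat.mul_le_mul_left (g u) ?_
    calc ∑ w, g w * g (c + (u + w)) = ∑ w, g w * g ((c + u) + w) := by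
          refine Finset.sum_congr rfl fun w _ => by rw [add_assoc]
    _ ≤ ∑ w, g w * g w := cs_shift g (c + u)
  linarith [t1, t2, t3, t4]

theorem SC_bound {H : Type} [AddCommGroup H] [Fintype H] [DecidableEq H] (F g : H → ℕ) (M : ℕ)
    (hFg : ∀ u, F u = (if u = 0 then M else 0) + g u) (hg0 : g 0 = 0) :
    ∑ t, F t * (∑ u, ∑ w, F u * F w * g (t + (u + w))) ≤
      M * M * (∑ w, g w * g w) +
        (M + ∑ w, g w) * (2 * (M * ∑ w, g w * g w) + (∑ w, g w) * (∑ w, g w * g w)) := by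
  have hFtg : ∑ t, F t * g t = ∑ w, g w * g w := by
    refine Finset.sum_congr rfl fun t _ => ?_
    rcases eq_or_ne t 0 with rfl | h
    · rw [hg0, mul_zero, mul_zero]
    · rw [hFg t, if_neg h, zero_add]
  have hsumF : ∑ t, F t = M + ∑ w, g w := by
    simp only [hFg, Finset.sum_add_distrib, Finset.sum_ite_eq', Finset.mem_univ, if_true]
  calc ∑ t, F t * (∑ u, ∑ w, F u * F w * g (t + (u + w)))
      ≤ ∑ t, F t * (M * M * g t + 2 * (M * ∑ w, g w * g w) + (∑ w, g w) * (∑ w, g w * g w)) :=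
        Finset.sum_le_sum fun t _ => Nat.mul_le_mul_left _ (SB_bound F g M hFg t)
  _ = ∑ t, (M * M * (F t * g t) + F t * (2 * (M * ∑ w, g w * g w) + (∑ w, g w) * (∑ w, g w * g w))) := by
        refine Finset.sum_congr rfl fun t _ => by ring
  _ = M * M * (∑ t, F t * g t) +
        (∑ t, F t) * (2 * (M * ∑ w, g w * g w) + (∑ w, g w) * (∑ w, g w * g w)) := by
        rw [Finset.sum_add_distrib, ← Finset.mul_sum, ← Finset.sum_mul]
  _ = _ := by rw [hFtg, hsumF]

theorem card_le_sum_witness {α β : Type} [Fintype α] [Fintype β] [DecidableEq α] [DecidableEq β]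
    (P : α → Prop) [DecidablePred P] (Q : β → α → Prop) [∀ b, DecidablePred (Q b)]
    (h : ∀ a, P a → ∃ b, Q b a) :
    (Finset.univ.filter P).card ≤ ∑ b, (Finset.univ.filter (Q b)).card := by
  have hsub : Finset.univ.filter P ⊆
      (Finset.univ.filter fun q : β × α => Q q.1 q.2).image Prod.snd := by
    intro a ha
    rw [Finset.mem_filter] at ha
    obtain ⟨b, hb⟩ := h a ha.2
    exact Finset.mem_image.mpr ⟨(b, a), Finset.mem_filter.mpr ⟨Finset.mem_univ _, hb⟩, rfl⟩
  calc (Finset.univ.filter P).card ≤ _ := Finset.card_le_card hsub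
  _ ≤ (Finset.univ.filter fun q : β × α => Q q.1 q.2).card := Finset.card_image_le
  _ = ∑ b, (Finset.univ.filter (Q b)).card := by
      rw [Finset.card_filter, Fintype.sum_prod_type]
      exact Finset.sum_congr rfl fun b _ => (Finset.card_filter _ _).symm

theorem card_filter_prod4 {α : Type} [Fintype α] [DecidableEq α]
    (P1 P2 P3 P4 : α → Prop) [DecidablePred P1] [DecidablePred P2] [DecidablePred P3]
    [DecidablePred P4] :
    (Finset.univ.filter fun t : α × α × α × α => P1 t.1 ∧ P2 t.2.1 ∧ P3 t.2.2.1 ∧ P4 t.2.2.2).card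
      = (Finset.univ.filter P1).card * ((Finset.univ.filter P2).card *
        ((Finset.univ.filter P3).card * (Finset.univ.filter P4).card)) := by
  rw [show (Finset.univ : Finset (α × α × α × α)) = Finset.univ ×ˢ Finset.univ from rfl,
    Finset.filter_product P1 (fun y : α × α × α => P2 y.1 ∧ P3 y.2.1 ∧ P4 y.2.2),
    Finset.card_product,
    show (Finset.univ : Finset (α × α × α)) = Finset.univ ×ˢ Finset.univ from rfl,
    Finset.filter_product P2 (fun y : α × α => P3 y.1 ∧ P4 y.2), Finset.card_product,
    show (Finset.univ : Finset (α × α)) = Finset.univ ×ˢ Finset.univ from rfl,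
    Finset.filter_product P3 P4, Finset.card_product]

theorem card_submodule (p : ℕ) [Fact p.Prime] {H : Type} [AddCommGroup H] [Module (ZMod p) H]
    [Fintype H] (W : Submodule (ZMod p) H) :
    Nat.card W = p ^ (Module.finrank (ZMod p) W) := by
  classical
  rw [Nat.card_eq_fintype_card, Module.card_eq_pow_finrank (K := ZMod p) (V := W), ZMod.card]

theorem card_sup3 (p : ℕ) [Fact p.Prime] {H : Type} [AddCommGroup H] [Module (ZMod p) H]
    [Fintype H] (d : ℕ) (W1 W2 W3 : Submodule (ZMod p) H)
    (h1 : Nat.card W1 = p ^ d) (h2 : Nat.card W2 = p ^ d) (h3 : Nat.card W3 = p ^ d)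
    (h12 : W1 ⊓ W2 = ⊥) (h123 : (W1 ⊔ W2) ⊓ W3 = ⊥) :
    Nat.card ↥(W1 ⊔ W2 ⊔ W3) = p ^ (3 * d) := by
  classical
  have hp2 : 2 ≤ p := (Fact.out : p.Prime).two_le
  have inj := Nat.pow_right_injective hp2
  have e1 : Module.finrank (ZMod p) W1 = d := inj (by show p ^ _ = p ^ _; rw [← card_submodule p W1, h1])
  have e2 : Module.finrank (ZMod p) W2 = d := inj (by show p ^ _ = p ^ _; rw [← card_submodule p W2, h2])
  have e3 : Module.finrank (ZMod p) W3 = d := inj (by show p ^ _ = p ^ _; rw [← card_submodule p W3, h3])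
  have f12 : Module.finrank (ZMod p) ↥(W1 ⊔ W2) = d + d := by
    have := Submodule.finrank_sup_add_finrank_inf_eq W1 W2
    rw [h12, finrank_bot, add_zero, e1, e2] at this
    exact this
  have f123 : Module.finrank (ZMod p) ↥(W1 ⊔ W2 ⊔ W3) = d + d + d := by
    have := Submodule.finrank_sup_add_finrank_inf_eq (W1 ⊔ W2) W3
    rw [h123, finrank_bot, add_zero, f12, e3] at this
    exact this
  rw [card_submodule p, f123]
  ring_nf

theorem card_filter_prod2 {α β : Type} [Fintype α] [Fintype β] (P : α → Prop) (Q : β → Prop)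
    [DecidablePred P] [DecidablePred Q] :
    (Finset.univ.filter fun t : α × β => P t.1 ∧ Q t.2).card
      = (Finset.univ.filter P).card * (Finset.univ.filter Q).card := by
  rw [show (Finset.univ : Finset (α × β)) = Finset.univ ×ˢ Finset.univ from rfl,
    Finset.filter_product, Finset.card_product]

set_option maxHeartbeats 2000000 in
/-- **Claim 12 of the paper**: for a quasirandom linear system of subspaces, all but
at most `8ε'|G|⁴` quadruples `(a,x,y,z)` satisfy the three genericity conditions. -/
theorem good_quadruples_count
    (p : ℕ) [Fact p.Prime]
    (G H : Type) [AddCommGroup G] [AddCommGroup H]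
    [Module (ZMod p) G] [Module (ZMod p) H]
    [FiniteDimensional (ZMod p) G] [FiniteDimensional (ZMod p) H]
    [Finite G] [Finite H]
    (V : G → Submodule (ZMod p) H)
    (hV0 : V 0 = ⊥)
    (hVadd : ∀ x₁ x₂ : G, V (x₁ + x₂) ≤ V x₁ ⊔ V x₂)
    (d : ℕ) (ε : ℝ) (hε0 : 0 < ε)
    (hi : (Nat.card {x : G | Nat.card ↥(V x) = p ^ d} : ℝ) ≥
      (1 - ε) * Nat.card G)
    (hii : (Nat.card {q : G × G | V q.1 ⊓ V q.2 = ⊥} : ℝ) ≥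
      (1 - ε) * (Nat.card G : ℝ) ^ 2)
    (ε' : ℝ) (hε' : ε' = (p : ℝ) ^ (4 * d) * Real.sqrt ε + 4 * ε) :
    (Nat.card {t : G × G × G × G |
        ¬ (Nat.card ↥(V t.1) = p ^ d ∧ Nat.card ↥(V t.2.1) = p ^ d ∧
           Nat.card ↥(V t.2.2.1) = p ^ d ∧
           Nat.card ↥(V (t.2.1 + t.2.2.1 - t.1)) = p ^ d ∧
           Nat.card ↥(V t.2.2.2) = p ^ d ∧
           Nat.card ↥(V t.1 ⊔ V t.2.1 ⊔ V t.2.2.1) = p ^ (3 * d) ∧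
           V (t.2.1 + t.2.2.1 - t.1) ⊓ (V t.2.1 ⊔ V t.2.2.1 ⊔ V t.2.2.2) = ⊥)} : ℝ) ≤
      8 * ε' * (Nat.card G : ℝ) ^ 4 := by
  classical
  haveI : Fintype G := Fintype.ofFinite G
  haveI : Fintype H := Fintype.ofFinite H
  -- conversion of Nat.card of setOf to Finset card
  have natcard_eq : ∀ {α : Type} [Fintype α] (P : α → Prop) [DecidablePred P],
      Nat.card {x : α | P x} = (Finset.univ.filter P).card := by
    intro α _ P _
    rw [Nat.card_eq_fintype_card]
    simp [Fintype.card_subtype]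
  set N := Fintype.card G with hN
  have hNc : (Nat.card G) = N := Nat.card_eq_fintype_card
  have hN1 : 1 ≤ N := Fintype.card_pos
  set S : Finset G := Finset.univ.filter (fun x => Nat.card (V x) = p ^ d) with hSdef
  set M := S.card with hMdef
  have hMN : M ≤ N := Finset.card_filter_le Finset.univ _
  have hMlow : (1 - ε) * N ≤ (M : ℝ) := by
    have h := hi
    rw [natcard_eq, hNc] at h
    exact h
  have hNM : ((N - M : ℕ) : ℝ) ≤ ε * N := by
    rw [Nat.cast_sub hMN]
    linarith [hMlow]
  set Pbad : Finset (G × G) := Finset.univ.filter (fun q => ¬ (V q.1 ⊓ V q.2 = ⊥)) with hPdef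
  have hPbad : (Pbad.card : ℝ) ≤ ε * (N:ℝ) ^ 2 := by
    have h1 : (Finset.univ.filter (fun q : G × G => V q.1 ⊓ V q.2 = ⊥)).card + Pbad.card
        = N * N := by
      rw [hPdef, Finset.card_filter_add_card_filter_not]
      simp [Finset.card_univ, hN]
    have h2 : (1 - ε) * (N:ℝ)^2 ≤
        ((Finset.univ.filter (fun q : G × G => V q.1 ⊓ V q.2 = ⊥)).card : ℝ) := by
      have h := hii; rw [natcard_eq, hNc] at h; exact h
    have h3 : ((Finset.univ.filter (fun q : G × G => V q.1 ⊓ V q.2 = ⊥)).card : ℝ)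
        + (Pbad.card : ℝ) = (N:ℝ) * N := by exact_mod_cast congrArg (Nat.cast : ℕ → ℝ) h1
    nlinarith [h2, h3]
  set F : H → ℕ := fun u => (Finset.univ.filter fun x => x ∈ S ∧ u ∈ V x).card with hFdef
  set g : H → ℕ := fun v => if v = 0 then 0 else F v with hgdef
  set A := ∑ w, g w * g w with hAdef
  set B := ∑ w, g w with hBdef
  have hg0 : g 0 = 0 := by simp [hgdef]
  have hFg : ∀ u, F u = (if u = 0 then M else 0) + g u := by
    intro u
    by_cases h : u = 0
    · subst h
      simp only [hgdef, if_pos rfl, add_zero, hFdef, if_pos rfl]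
      rw [hMdef]
      congr 1
      refine Finset.filter_congr ?_ |>.trans (Finset.filter_univ_mem S)
      intro x _
      simp [Submodule.zero_mem]
    · simp [hgdef, h]
  -- count of elements of a submodule
  have hVcount : ∀ x : G, (Finset.univ.filter fun v : H => v ∈ V x).card = Nat.card (V x) := by
    intro x
    rw [Nat.card_eq_fintype_card]
    exact (Fintype.card_subtype _).symm
  -- the filter computing g
  have hgcard : ∀ v : H,
      (Finset.univ.filter fun y => y ∈ S ∧ v ∈ V y ∧ v ≠ 0).card = g v := by
    intro v
    by_cases h : v = 0
    · subst h; simp [hgdef]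
    · rw [hgdef]
      simp only [if_neg h, hFdef]
      congr 1
      apply Finset.filter_congr
      intro y _
      simp [h]
  have hBle : B ≤ M * p ^ d := by
    have expand : B = ∑ x : G, (Finset.univ.filter fun v : H => x ∈ S ∧ v ∈ V x ∧ v ≠ 0).card := by
      rw [hBdef]
      calc ∑ v : H, g v = ∑ v : H, ∑ x : G, if x ∈ S ∧ v ∈ V x ∧ v ≠ 0 then 1 else 0 := by
            refine Finset.sum_congr rfl fun v _ => ?_
            rw [← hgcard v, Finset.card_filter]
      _ = ∑ x : G, ∑ v : H, if x ∈ S ∧ v ∈ V x ∧ v ≠ 0 then 1 else 0 := Finset.sum_comm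
      _ = _ := Finset.sum_congr rfl fun x _ => (Finset.card_filter _ _).symm
    rw [expand]
    have step : ∀ x : G, (Finset.univ.filter fun v : H => x ∈ S ∧ v ∈ V x ∧ v ≠ 0).card
        ≤ if x ∈ S then p ^ d else 0 := by
      intro x
      by_cases hx : x ∈ S
      · rw [if_pos hx]
        calc (Finset.univ.filter fun v : H => x ∈ S ∧ v ∈ V x ∧ v ≠ 0).card
            ≤ (Finset.univ.filter fun v : H => v ∈ V x).card := by
              refine Finset.card_le_card ?_
              intro v hv
              rw [Finset.mem_filter] at hv ⊢
              exact ⟨hv.1, hv.2.2.1⟩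
        _ = Nat.card (V x) := hVcount x
        _ = p ^ d := (Finset.mem_filter.mp hx).2
      · rw [if_neg hx]
        have : (Finset.univ.filter fun v : H => x ∈ S ∧ v ∈ V x ∧ v ≠ 0) = ∅ := by
          refine Finset.filter_eq_empty_iff.mpr fun v _ => by tauto
        simp [this]
    calc ∑ x : G, (Finset.univ.filter fun v : H => x ∈ S ∧ v ∈ V x ∧ v ≠ 0).card
        ≤ ∑ x : G, if x ∈ S then p ^ d else 0 := Finset.sum_le_sum fun x _ => step x
    _ = M * p ^ d := by
        rw [Finset.sum_ite_mem, Finset.univ_inter, Finset.sum_const, smul_eq_mul]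
  have hAle : A ≤ Pbad.card * p ^ d := by
    have expand : A = ∑ q : G × G, (Finset.univ.filter fun v : H =>
        (q.1 ∈ S ∧ v ∈ V q.1 ∧ v ≠ 0) ∧ (q.2 ∈ S ∧ v ∈ V q.2 ∧ v ≠ 0)).card := by
      rw [hAdef]
      calc ∑ v : H, g v * g v
          = ∑ v : H, (Finset.univ.filter fun q : G × G =>
            (q.1 ∈ S ∧ v ∈ V q.1 ∧ v ≠ 0) ∧ (q.2 ∈ S ∧ v ∈ V q.2 ∧ v ≠ 0)).card := by
            refine Finset.sum_congr rfl fun v _ => ?_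
            rw [card_filter_prod2 (fun a : G => a ∈ S ∧ v ∈ V a ∧ v ≠ 0)
              (fun a : G => a ∈ S ∧ v ∈ V a ∧ v ≠ 0), hgcard]
      _ = ∑ v : H, ∑ q : G × G, if (q.1 ∈ S ∧ v ∈ V q.1 ∧ v ≠ 0) ∧ (q.2 ∈ S ∧ v ∈ V q.2 ∧ v ≠ 0)
            then 1 else 0 := Finset.sum_congr rfl fun v _ => Finset.card_filter _ _
      _ = ∑ q : G × G, ∑ v : H, if (q.1 ∈ S ∧ v ∈ V q.1 ∧ v ≠ 0) ∧ (q.2 ∈ S ∧ v ∈ V q.2 ∧ v ≠ 0)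
            then 1 else 0 := Finset.sum_comm
      _ = _ := Finset.sum_congr rfl fun q _ => (Finset.card_filter _ _).symm
    rw [expand]
    have step : ∀ q : G × G, (Finset.univ.filter fun v : H =>
        (q.1 ∈ S ∧ v ∈ V q.1 ∧ v ≠ 0) ∧ (q.2 ∈ S ∧ v ∈ V q.2 ∧ v ≠ 0)).card
        ≤ if q ∈ Pbad then p ^ d else 0 := by
      intro q
      by_cases hq : V q.1 ⊓ V q.2 = ⊥
      · have hnot : q ∉ Pbad := by
          rw [hPdef, Finset.mem_filter]
          tauto
        rw [if_neg hnot]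
        have : (Finset.univ.filter fun v : H =>
            (q.1 ∈ S ∧ v ∈ V q.1 ∧ v ≠ 0) ∧ (q.2 ∈ S ∧ v ∈ V q.2 ∧ v ≠ 0)) = ∅ := by
          refine Finset.filter_eq_empty_iff.mpr fun v _ h => ?_
          have hv : v ∈ V q.1 ⊓ V q.2 := ⟨h.1.2.1, h.2.2.1⟩
          rw [hq, Submodule.mem_bot] at hv
          exact h.1.2.2 hv
        simp [this]
      · have hin : q ∈ Pbad := by
          rw [hPdef, Finset.mem_filter]
          exact ⟨Finset.mem_univ _, hq⟩
        rw [if_pos hin]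
        by_cases hq1 : q.1 ∈ S
        · calc (Finset.univ.filter fun v : H =>
              (q.1 ∈ S ∧ v ∈ V q.1 ∧ v ≠ 0) ∧ (q.2 ∈ S ∧ v ∈ V q.2 ∧ v ≠ 0)).card
              ≤ (Finset.univ.filter fun v : H => v ∈ V q.1).card := by
                refine Finset.card_le_card ?_
                intro v hv
                rw [Finset.mem_filter] at hv ⊢
                exact ⟨hv.1, hv.2.1.2.1⟩
          _ = Nat.card (V q.1) := hVcount q.1
          _ = p ^ d := (Finset.mem_filter.mp hq1).2
        · have : (Finset.univ.filter fun v : H =>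
              (q.1 ∈ S ∧ v ∈ V q.1 ∧ v ≠ 0) ∧ (q.2 ∈ S ∧ v ∈ V q.2 ∧ v ≠ 0)) = ∅ := by
            refine Finset.filter_eq_empty_iff.mpr fun v _ => by tauto
          simp [this]
    calc ∑ q : G × G, (Finset.univ.filter fun v : H =>
          (q.1 ∈ S ∧ v ∈ V q.1 ∧ v ≠ 0) ∧ (q.2 ∈ S ∧ v ∈ V q.2 ∧ v ≠ 0)).card
        ≤ ∑ q : G × G, if q ∈ Pbad then p ^ d else 0 := Finset.sum_le_sum fun q _ => step q
    _ = Pbad.card * p ^ d := by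
        rw [Finset.sum_ite_mem, Finset.univ_inter, Finset.sum_const, smul_eq_mul]
  have hcompl : (Finset.univ.filter fun x : G => x ∉ S).card = N - M := by
    have h := Finset.card_filter_add_card_filter_not (s := Finset.univ)
      (p := fun x : G => x ∈ S)
    rw [Finset.filter_univ_mem] at h
    have : (Finset.univ : Finset G).card = N := Finset.card_univ
    omega
  have hTrue : (Finset.univ.filter fun _ : G => True).card = N := by
    rw [Finset.filter_true]; exact Finset.card_univ
  -- bijection sending (a,x,y,z) to (x+y-a,x,y,z)
  have hbij : ∀ (P : G → G → G → G → Prop) (_ : ∀ a x y z, Decidable (P a x y z)),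
      (Finset.univ.filter fun t : G × G × G × G =>
        P (t.2.1 + t.2.2.1 - t.1) t.2.1 t.2.2.1 t.2.2.2).card
      = (Finset.univ.filter fun t : G × G × G × G => P t.1 t.2.1 t.2.2.1 t.2.2.2).card := by
    intro P _
    refine Finset.card_bij'
      (fun t _ => (t.2.1 + t.2.2.1 - t.1, t.2.1, t.2.2.1, t.2.2.2))
      (fun t _ => (t.2.1 + t.2.2.1 - t.1, t.2.1, t.2.2.1, t.2.2.2)) ?_ ?_ ?_ ?_
    · intro t ht
      rw [Finset.mem_filter] at ht ⊢
      exact ⟨Finset.mem_univ _, ht.2⟩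
    · intro t ht
      rw [Finset.mem_filter] at ht ⊢
      refine ⟨Finset.mem_univ _, ?_⟩
      simpa [sub_sub_cancel] using ht.2
    · intro t _
      simp [sub_sub_cancel]
    · intro t _
      simp [sub_sub_cancel]
  -- counts of the simple bad sets
  have hb1 : (Finset.univ.filter fun t : G × G × G × G => t.1 ∉ S).card
      = (N - M) * (N * (N * N)) := by
    rw [Finset.filter_congr (q := fun t : G × G × G × G =>
        (t.1 ∉ S) ∧ True ∧ True ∧ True) (fun t _ => by tauto),
      card_filter_prod4 (fun a : G => a ∉ S) (fun _ => True) (fun _ => True) (fun _ => True), hcompl, hTrue]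
  have hb2 : (Finset.univ.filter fun t : G × G × G × G => t.2.1 ∉ S).card
      = (N - M) * (N * (N * N)) := by
    rw [Finset.filter_congr (q := fun t : G × G × G × G =>
        True ∧ (t.2.1 ∉ S) ∧ True ∧ True) (fun t _ => by tauto),
      card_filter_prod4 (fun _ : G => True) (fun a => a ∉ S) (fun _ => True) (fun _ => True), hcompl, hTrue]
    ring
  have hb3 : (Finset.univ.filter fun t : G × G × G × G => t.2.2.1 ∉ S).card
      = (N - M) * (N * (N * N)) := by
    rw [Finset.filter_congr (q := fun t : G × G × G × G =>
        True ∧ True ∧ (t.2.2.1 ∉ S) ∧ True) (fun t _ => by tauto),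
      card_filter_prod4 (fun _ : G => True) (fun _ => True) (fun a => a ∉ S) (fun _ => True), hcompl, hTrue]
    ring
  have hb5 : (Finset.univ.filter fun t : G × G × G × G => t.2.2.2 ∉ S).card
      = (N - M) * (N * (N * N)) := by
    rw [Finset.filter_congr (q := fun t : G × G × G × G =>
        True ∧ True ∧ True ∧ (t.2.2.2 ∉ S)) (fun t _ => by tauto),
      card_filter_prod4 (fun _ : G => True) (fun _ => True) (fun _ => True) (fun a => a ∉ S), hcompl, hTrue]
    ring
  have hb4 : (Finset.univ.filter fun t : G × G × G × G =>
      (t.2.1 + t.2.2.1 - t.1) ∉ S).card = (N - M) * (N * (N * N)) := by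
    rw [hbij (fun a _ _ _ => a ∉ S) (fun _ _ _ _ => inferInstance)]
    exact hb1
  have hb6 : (Finset.univ.filter fun t : G × G × G × G =>
      ¬ (V t.1 ⊓ V t.2.1 = ⊥)).card = Pbad.card * (N * N) := by
    calc (Finset.univ.filter fun t : G × G × G × G => ¬ (V t.1 ⊓ V t.2.1 = ⊥)).card
        = ∑ a : G, ∑ x : G, ∑ _r : G × G, (if ¬ (V a ⊓ V x = ⊥) then 1 else 0) := by
          rw [Finset.card_filter, Fintype.sum_prod_type]
          exact Finset.sum_congr rfl fun a _ => Fintype.sum_prod_type _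
    _ = ∑ a : G, ∑ x : G, (if ¬ (V a ⊓ V x = ⊥) then 1 else 0) * (N * N) := by
          refine Finset.sum_congr rfl fun a _ => Finset.sum_congr rfl fun x _ => ?_
          rw [Finset.sum_const, Finset.card_univ, smul_eq_mul, mul_comm]
          congr 1
          rw [Fintype.card_prod]
    _ = (∑ q : G × G, if ¬ (V q.1 ⊓ V q.2 = ⊥) then 1 else 0) * (N * N) := by
          rw [Fintype.sum_prod_type]
          rw [Finset.sum_mul]
          exact Finset.sum_congr rfl fun a _ => (Finset.sum_mul _ _ _).symm
    _ = Pbad.card * (N * N) := by rw [hPdef, Finset.card_filter]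
  have hb7 : (Finset.univ.filter fun t : G × G × G × G =>
      t.1 ∈ S ∧ t.2.1 ∈ S ∧ t.2.2.1 ∈ S ∧ ¬ ((V t.1 ⊔ V t.2.1) ⊓ V t.2.2.1 = ⊥)).card
      ≤ (2 * (M * A) + B * A) * N := by
    have hwit : ∀ t : G × G × G × G,
        (t.1 ∈ S ∧ t.2.1 ∈ S ∧ t.2.2.1 ∈ S ∧ ¬ ((V t.1 ⊔ V t.2.1) ⊓ V t.2.2.1 = ⊥)) →
        ∃ b : H × H, (t.1 ∈ S ∧ b.1 ∈ V t.1) ∧ (t.2.1 ∈ S ∧ b.2 ∈ V t.2.1) ∧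
          (t.2.2.1 ∈ S ∧ (b.1 + b.2 ∈ V t.2.2.1 ∧ b.1 + b.2 ≠ 0)) ∧ True := by
      intro t ht
      obtain ⟨h1, h2, h3, h4⟩ := ht
      obtain ⟨v, hv, hv0⟩ := Submodule.exists_mem_ne_zero_of_ne_bot h4
      obtain ⟨hvsup, hvy⟩ := Submodule.mem_inf.mp hv
      obtain ⟨u, hu, w, hw2, huw⟩ := Submodule.mem_sup.mp hvsup
      exact ⟨(u, w), ⟨h1, hu⟩, ⟨h2, hw2⟩, ⟨h3, by rw [huw]; exact ⟨hvy, hv0⟩⟩, trivial⟩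
    have hw := card_le_sum_witness _ _ hwit
    refine le_trans hw ?_
    have heval : ∀ b : H × H,
        (Finset.univ.filter fun t : G × G × G × G =>
          (t.1 ∈ S ∧ b.1 ∈ V t.1) ∧ (t.2.1 ∈ S ∧ b.2 ∈ V t.2.1) ∧
          (t.2.2.1 ∈ S ∧ (b.1 + b.2 ∈ V t.2.2.1 ∧ b.1 + b.2 ≠ 0)) ∧ True).card
        = F b.1 * (F b.2 * (g (b.1 + b.2) * N)) := by
      intro b
      rw [card_filter_prod4 (fun a : G => a ∈ S ∧ b.1 ∈ V a) (fun a => a ∈ S ∧ b.2 ∈ V a)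
        (fun a => a ∈ S ∧ (b.1 + b.2 ∈ V a ∧ b.1 + b.2 ≠ 0)) (fun _ => True), hTrue,
        hgcard (b.1 + b.2)]
    have hSB := SB_bound F g M hFg 0
    rw [hg0, mul_zero, zero_add, ← hAdef, ← hBdef] at hSB
    calc ∑ b : H × H, (Finset.univ.filter fun t : G × G × G × G =>
          (t.1 ∈ S ∧ b.1 ∈ V t.1) ∧ (t.2.1 ∈ S ∧ b.2 ∈ V t.2.1) ∧
          (t.2.2.1 ∈ S ∧ (b.1 + b.2 ∈ V t.2.2.1 ∧ b.1 + b.2 ≠ 0)) ∧ True).card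
        = ∑ b : H × H, F b.1 * (F b.2 * (g (b.1 + b.2) * N)) :=
          Finset.sum_congr rfl fun b _ => heval b
    _ = (∑ u : H, ∑ w : H, F u * F w * g (0 + (u + w))) * N := by
        rw [Fintype.sum_prod_type, Finset.sum_mul]
        refine Finset.sum_congr rfl fun u _ => ?_
        rw [Finset.sum_mul]
        refine Finset.sum_congr rfl fun w _ => ?_
        rw [zero_add]
        ring
    _ ≤ (2 * (M * A) + B * A) * N := Nat.mul_le_mul_right N hSB
  have hb8' : (Finset.univ.filter fun t : G × G × G × G =>
      t.1 ∈ S ∧ t.2.1 ∈ S ∧ t.2.2.1 ∈ S ∧ t.2.2.2 ∈ S ∧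
        ¬ (V t.1 ⊓ (V t.2.1 ⊔ V t.2.2.1 ⊔ V t.2.2.2) = ⊥)).card
      ≤ M * M * A + (M + B) * (2 * (M * A) + B * A) := by
    have hwit : ∀ t : G × G × G × G,
        (t.1 ∈ S ∧ t.2.1 ∈ S ∧ t.2.2.1 ∈ S ∧ t.2.2.2 ∈ S ∧
          ¬ (V t.1 ⊓ (V t.2.1 ⊔ V t.2.2.1 ⊔ V t.2.2.2) = ⊥)) →
        ∃ b : H × H × H,
          (t.1 ∈ S ∧ (b.1 + (b.2.1 + b.2.2) ∈ V t.1 ∧ b.1 + (b.2.1 + b.2.2) ≠ 0)) ∧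
          (t.2.1 ∈ S ∧ b.1 ∈ V t.2.1) ∧ (t.2.2.1 ∈ S ∧ b.2.1 ∈ V t.2.2.1) ∧
          (t.2.2.2 ∈ S ∧ b.2.2 ∈ V t.2.2.2) := by
      intro t ht
      obtain ⟨h1, h2, h3, h4, h5⟩ := ht
      obtain ⟨v, hv, hv0⟩ := Submodule.exists_mem_ne_zero_of_ne_bot h5
      obtain ⟨hvb, hvsup⟩ := Submodule.mem_inf.mp hv
      obtain ⟨m, hm, s2, hs2, hms⟩ := Submodule.mem_sup.mp hvsup
      obtain ⟨u, hu, w, hw2, huw⟩ := Submodule.mem_sup.mp hm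
      have hveq : u + (w + s2) = v := by rw [← add_assoc, huw, hms]
      refine ⟨(u, w, s2), ⟨h1, ?_, ?_⟩, ⟨h2, hu⟩, ⟨h3, hw2⟩, ⟨h4, hs2⟩⟩
      · show u + (w + s2) ∈ V t.1
        rw [hveq]; exact hvb
      · show u + (w + s2) ≠ 0
        rw [hveq]; exact hv0
    have hw := card_le_sum_witness _ _ hwit
    refine le_trans hw ?_
    have heval : ∀ b : H × H × H,
        (Finset.univ.filter fun t : G × G × G × G =>
          (t.1 ∈ S ∧ (b.1 + (b.2.1 + b.2.2) ∈ V t.1 ∧ b.1 + (b.2.1 + b.2.2) ≠ 0)) ∧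
          (t.2.1 ∈ S ∧ b.1 ∈ V t.2.1) ∧ (t.2.2.1 ∈ S ∧ b.2.1 ∈ V t.2.2.1) ∧
          (t.2.2.2 ∈ S ∧ b.2.2 ∈ V t.2.2.2)).card
        = g (b.1 + (b.2.1 + b.2.2)) * (F b.1 * (F b.2.1 * F b.2.2)) := by
      intro b
      rw [card_filter_prod4
        (fun a : G => a ∈ S ∧ (b.1 + (b.2.1 + b.2.2) ∈ V a ∧ b.1 + (b.2.1 + b.2.2) ≠ 0))
        (fun a => a ∈ S ∧ b.1 ∈ V a) (fun a => a ∈ S ∧ b.2.1 ∈ V a)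
        (fun a => a ∈ S ∧ b.2.2 ∈ V a), hgcard (b.1 + (b.2.1 + b.2.2))]
    have hSC := SC_bound F g M hFg hg0
    rw [← hAdef, ← hBdef] at hSC
    calc ∑ b : H × H × H, (Finset.univ.filter fun t : G × G × G × G =>
          (t.1 ∈ S ∧ (b.1 + (b.2.1 + b.2.2) ∈ V t.1 ∧ b.1 + (b.2.1 + b.2.2) ≠ 0)) ∧
          (t.2.1 ∈ S ∧ b.1 ∈ V t.2.1) ∧ (t.2.2.1 ∈ S ∧ b.2.1 ∈ V t.2.2.1) ∧
          (t.2.2.2 ∈ S ∧ b.2.2 ∈ V t.2.2.2)).card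
        = ∑ b : H × H × H, g (b.1 + (b.2.1 + b.2.2)) * (F b.1 * (F b.2.1 * F b.2.2)) :=
          Finset.sum_congr rfl fun b _ => heval b
    _ = ∑ t : H, F t * (∑ u : H, ∑ w : H, F u * F w * g (t + (u + w))) := by
        rw [Fintype.sum_prod_type]
        refine Finset.sum_congr rfl fun t _ => ?_
        rw [Fintype.sum_prod_type, Finset.mul_sum]
        refine Finset.sum_congr rfl fun u _ => ?_
        rw [Finset.mul_sum]
        refine Finset.sum_congr rfl fun w _ => ?_
        ring
    _ ≤ M * M * A + (M + B) * (2 * (M * A) + B * A) := hSC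
  have hb8 : (Finset.univ.filter fun t : G × G × G × G =>
      (t.2.1 + t.2.2.1 - t.1) ∈ S ∧ t.2.1 ∈ S ∧ t.2.2.1 ∈ S ∧ t.2.2.2 ∈ S ∧
        ¬ (V (t.2.1 + t.2.2.1 - t.1) ⊓ (V t.2.1 ⊔ V t.2.2.1 ⊔ V t.2.2.2) = ⊥)).card
      ≤ M * M * A + (M + B) * (2 * (M * A) + B * A) := by
    rw [hbij (fun a x y z => a ∈ S ∧ x ∈ S ∧ y ∈ S ∧ z ∈ S ∧ ¬ (V a ⊓ (V x ⊔ V y ⊔ V z) = ⊥))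
      (fun _ _ _ _ => inferInstance)]
    exact hb8'
  set b1 : Finset (G × G × G × G) := Finset.univ.filter (fun t => t.1 ∉ S) with hb1def
  set b2 : Finset (G × G × G × G) := Finset.univ.filter (fun t => t.2.1 ∉ S) with hb2def
  set b3 : Finset (G × G × G × G) := Finset.univ.filter (fun t => t.2.2.1 ∉ S) with hb3def
  set b4 : Finset (G × G × G × G) :=
    Finset.univ.filter (fun t => (t.2.1 + t.2.2.1 - t.1) ∉ S) with hb4def
  set b5 : Finset (G × G × G × G) := Finset.univ.filter (fun t => t.2.2.2 ∉ S) with hb5def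
  set b6 : Finset (G × G × G × G) :=
    Finset.univ.filter (fun t => ¬ (V t.1 ⊓ V t.2.1 = ⊥)) with hb6def
  set b7 : Finset (G × G × G × G) := Finset.univ.filter (fun t =>
    t.1 ∈ S ∧ t.2.1 ∈ S ∧ t.2.2.1 ∈ S ∧ ¬ ((V t.1 ⊔ V t.2.1) ⊓ V t.2.2.1 = ⊥)) with hb7def
  set b8 : Finset (G × G × G × G) := Finset.univ.filter (fun t =>
    (t.2.1 + t.2.2.1 - t.1) ∈ S ∧ t.2.1 ∈ S ∧ t.2.2.1 ∈ S ∧ t.2.2.2 ∈ S ∧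
      ¬ (V (t.2.1 + t.2.2.1 - t.1) ⊓ (V t.2.1 ⊔ V t.2.2.1 ⊔ V t.2.2.2) = ⊥)) with hb8def
  set Badset : Finset (G × G × G × G) := Finset.univ.filter (fun t =>
    ¬ (Nat.card ↥(V t.1) = p ^ d ∧ Nat.card ↥(V t.2.1) = p ^ d ∧
       Nat.card ↥(V t.2.2.1) = p ^ d ∧
       Nat.card ↥(V (t.2.1 + t.2.2.1 - t.1)) = p ^ d ∧
       Nat.card ↥(V t.2.2.2) = p ^ d ∧
       Nat.card ↥(V t.1 ⊔ V t.2.1 ⊔ V t.2.2.1) = p ^ (3 * d) ∧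
       V (t.2.1 + t.2.2.1 - t.1) ⊓ (V t.2.1 ⊔ V t.2.2.1 ⊔ V t.2.2.2) = ⊥)) with hBaddef
  have hsub : Badset ⊆ b1 ∪ b2 ∪ b3 ∪ b4 ∪ b5 ∪ b6 ∪ b7 ∪ b8 := by
    intro t ht
    rw [hBaddef, Finset.mem_filter] at ht
    by_contra hmem
    simp only [Finset.mem_union, not_or] at hmem
    obtain ⟨⟨⟨⟨⟨⟨⟨n1, n2⟩, n3⟩, n4⟩, n5⟩, n6⟩, n7⟩, n8⟩ := hmem
    have m1 : t.1 ∈ S := by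
      by_contra h
      exact n1 (by rw [hb1def, Finset.mem_filter]; exact ⟨Finset.mem_univ _, h⟩)
    have m2 : t.2.1 ∈ S := by
      by_contra h
      exact n2 (by rw [hb2def, Finset.mem_filter]; exact ⟨Finset.mem_univ _, h⟩)
    have m3 : t.2.2.1 ∈ S := by
      by_contra h
      exact n3 (by rw [hb3def, Finset.mem_filter]; exact ⟨Finset.mem_univ _, h⟩)
    have m4 : (t.2.1 + t.2.2.1 - t.1) ∈ S := by
      by_contra h
      exact n4 (by rw [hb4def, Finset.mem_filter]; exact ⟨Finset.mem_univ _, h⟩)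
    have m5 : t.2.2.2 ∈ S := by
      by_contra h
      exact n5 (by rw [hb5def, Finset.mem_filter]; exact ⟨Finset.mem_univ _, h⟩)
    have m6 : V t.1 ⊓ V t.2.1 = ⊥ := by
      by_contra h
      exact n6 (by rw [hb6def, Finset.mem_filter]; exact ⟨Finset.mem_univ _, h⟩)
    have m7 : (V t.1 ⊔ V t.2.1) ⊓ V t.2.2.1 = ⊥ := by
      by_contra h
      exact n7 (by rw [hb7def, Finset.mem_filter]; exact ⟨Finset.mem_univ _, m1, m2, m3, h⟩)
    have m8 : V (t.2.1 + t.2.2.1 - t.1) ⊓ (V t.2.1 ⊔ V t.2.2.1 ⊔ V t.2.2.2) = ⊥ := by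
      by_contra h
      exact n8 (by rw [hb8def, Finset.mem_filter]; exact ⟨Finset.mem_univ _, m4, m2, m3, m5, h⟩)
    have hSmem : ∀ x : G, x ∈ S → Nat.card ↥(V x) = p ^ d := by
      intro x hx
      rw [hSdef, Finset.mem_filter] at hx
      exact hx.2
    exact ht.2 ⟨hSmem _ m1, hSmem _ m2, hSmem _ m3, hSmem _ m4, hSmem _ m5,
      card_sup3 p d _ _ _ (hSmem _ m1) (hSmem _ m2) (hSmem _ m3) m6 m7, m8⟩
  have hU : Badset.card ≤ b1.card + b2.card + b3.card + b4.card + b5.card + b6.card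
      + b7.card + b8.card := by
    refine le_trans (Finset.card_le_card hsub) ?_
    calc (b1 ∪ b2 ∪ b3 ∪ b4 ∪ b5 ∪ b6 ∪ b7 ∪ b8).card
        ≤ (b1 ∪ b2 ∪ b3 ∪ b4 ∪ b5 ∪ b6 ∪ b7).card + b8.card := Finset.card_union_le _ _
      _ ≤ (b1 ∪ b2 ∪ b3 ∪ b4 ∪ b5 ∪ b6).card + b7.card + b8.card :=
          by have := Finset.card_union_le (b1 ∪ b2 ∪ b3 ∪ b4 ∪ b5 ∪ b6) b7; omega
      _ ≤ (b1 ∪ b2 ∪ b3 ∪ b4 ∪ b5).card + b6.card + b7.card + b8.card :=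
          by have := Finset.card_union_le (b1 ∪ b2 ∪ b3 ∪ b4 ∪ b5) b6; omega
      _ ≤ (b1 ∪ b2 ∪ b3 ∪ b4).card + b5.card + b6.card + b7.card + b8.card :=
          by have := Finset.card_union_le (b1 ∪ b2 ∪ b3 ∪ b4) b5; omega
      _ ≤ (b1 ∪ b2 ∪ b3).card + b4.card + b5.card + b6.card + b7.card + b8.card :=
          by have := Finset.card_union_le (b1 ∪ b2 ∪ b3) b4; omega
      _ ≤ (b1 ∪ b2).card + b3.card + b4.card + b5.card + b6.card + b7.card + b8.card :=
          by have := Finset.card_union_le (b1 ∪ b2) b3; omega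
      _ ≤ b1.card + b2.card + b3.card + b4.card + b5.card + b6.card + b7.card + b8.card :=
          by have := Finset.card_union_le b1 b2; omega
  clear_value N S M Pbad F g A B b1 b2 b3 b4 b5 b6 b7 b8 Badset
  -- real-number estimates
  have hp2 : 2 ≤ p := (Fact.out : p.Prime).two_le
  have hp1R : (1:ℝ) ≤ (p:ℝ) := by exact_mod_cast Nat.one_le_of_lt hp2
  have hpd1 : (1:ℝ) ≤ (p:ℝ)^d := by
    calc (1:ℝ) = 1^d := (one_pow d).symm
    _ ≤ (p:ℝ)^d := pow_le_pow_left₀ (by norm_num) hp1R d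
  have hNR1 : (1:ℝ) ≤ (N:ℝ) := by exact_mod_cast hN1
  have hMR : (M:ℝ) ≤ (N:ℝ) := by exact_mod_cast hMN
  have hM0 : (0:ℝ) ≤ (M:ℝ) := Nat.cast_nonneg M
  have hA0 : (0:ℝ) ≤ (A:ℝ) := Nat.cast_nonneg A
  have hB0 : (0:ℝ) ≤ (B:ℝ) := Nat.cast_nonneg B
  have hAR : (A:ℝ) ≤ ε * (N:ℝ)^2 * (p:ℝ)^d := by
    have h1 : (A:ℝ) ≤ (Pbad.card : ℝ) * (p:ℝ)^d := by exact_mod_cast hAle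
    calc (A:ℝ) ≤ (Pbad.card:ℝ) * (p:ℝ)^d := h1
    _ ≤ (ε*(N:ℝ)^2) * (p:ℝ)^d := mul_le_mul_of_nonneg_right hPbad (by positivity)
    _ = ε * (N:ℝ)^2 * (p:ℝ)^d := by ring
  have hBR : (B:ℝ) ≤ (N:ℝ) * (p:ℝ)^d := by
    calc (B:ℝ) ≤ (M:ℝ)*(p:ℝ)^d := by exact_mod_cast hBle
    _ ≤ (N:ℝ)*(p:ℝ)^d := mul_le_mul_of_nonneg_right hMR (by positivity)
  have hmain : (Badset.card:ℝ) ≤ 6*ε*(N:ℝ)^4 + 10*((p:ℝ)^d)^3*ε*(N:ℝ)^4 := by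
    have hUR : (Badset.card:ℝ) ≤ (b1.card:ℝ)+(b2.card:ℝ)+(b3.card:ℝ)+(b4.card:ℝ)
        +(b5.card:ℝ)+(b6.card:ℝ)+(b7.card:ℝ)+(b8.card:ℝ) := by exact_mod_cast hU
    have e15 : (((N-M) * (N * (N * N)) : ℕ):ℝ) ≤ ε*(N:ℝ)^4 := by
      push_cast
      calc ((N-M:ℕ):ℝ) * ((N:ℝ)*((N:ℝ)*(N:ℝ)))
          ≤ (ε*(N:ℝ))*((N:ℝ)*((N:ℝ)*(N:ℝ))) := mul_le_mul_of_nonneg_right hNM (by positivity)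
      _ = ε*(N:ℝ)^4 := by ring
    have e1 : (b1.card:ℝ) ≤ ε*(N:ℝ)^4 := by rw [hb1]; exact e15
    have e2 : (b2.card:ℝ) ≤ ε*(N:ℝ)^4 := by rw [hb2]; exact e15
    have e3 : (b3.card:ℝ) ≤ ε*(N:ℝ)^4 := by rw [hb3]; exact e15
    have e4 : (b4.card:ℝ) ≤ ε*(N:ℝ)^4 := by rw [hb4]; exact e15
    have e5 : (b5.card:ℝ) ≤ ε*(N:ℝ)^4 := by rw [hb5]; exact e15
    have e6 : (b6.card:ℝ) ≤ ε*(N:ℝ)^4 := by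
      rw [hb6]
      push_cast
      calc (Pbad.card:ℝ) * ((N:ℝ)*(N:ℝ))
          ≤ (ε*(N:ℝ)^2)*((N:ℝ)*(N:ℝ)) := mul_le_mul_of_nonneg_right hPbad (by positivity)
      _ = ε*(N:ℝ)^4 := by ring
    have e7 : (b7.card:ℝ) ≤ (2*((M:ℝ)*(A:ℝ)) + (B:ℝ)*(A:ℝ))*(N:ℝ) := by exact_mod_cast hb7
    have e8 : (b8.card:ℝ) ≤ (M:ℝ)*(M:ℝ)*(A:ℝ)
        + ((M:ℝ)+(B:ℝ))*(2*((M:ℝ)*(A:ℝ))+(B:ℝ)*(A:ℝ)) := by exact_mod_cast hb8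
    have c3 : 2*((M:ℝ)*(A:ℝ)) + (B:ℝ)*(A:ℝ)
        ≤ (2*(N:ℝ) + (N:ℝ)*(p:ℝ)^d)*(A:ℝ) := by
      have u1 : (M:ℝ)*(A:ℝ) ≤ (N:ℝ)*(A:ℝ) := mul_le_mul_of_nonneg_right hMR hA0
      have u2 : (B:ℝ)*(A:ℝ) ≤ ((N:ℝ)*(p:ℝ)^d)*(A:ℝ) := mul_le_mul_of_nonneg_right hBR hA0
      linarith [u1, u2]
    have c4 : (M:ℝ)+(B:ℝ) ≤ (N:ℝ) + (N:ℝ)*(p:ℝ)^d := by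
      have := hBR; linarith
    have c5 : (M:ℝ)*(M:ℝ)*(A:ℝ) ≤ (N:ℝ)*(N:ℝ)*(A:ℝ) := by
      nlinarith [mul_le_mul hMR hMR hM0 (le_trans zero_le_one hNR1), hA0]
    have c6 : ((M:ℝ)+(B:ℝ))*(2*((M:ℝ)*(A:ℝ))+(B:ℝ)*(A:ℝ))
        ≤ ((N:ℝ)+(N:ℝ)*(p:ℝ)^d)*((2*(N:ℝ)+(N:ℝ)*(p:ℝ)^d)*(A:ℝ)) := by
      refine mul_le_mul c4 c3 ?_ ?_
      · positivity
      · positivity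
    have hfac : (0:ℝ) ≤ (N:ℝ)^2*(A:ℝ)*(((p:ℝ)^d - 1)*(9*(p:ℝ)^d + 5)) := by
      have h1 : (0:ℝ) ≤ (p:ℝ)^d - 1 := by linarith
      have h2 : (0:ℝ) ≤ 9*(p:ℝ)^d + 5 := by positivity
      positivity
    have c7 : (2*(N:ℝ)+(N:ℝ)*(p:ℝ)^d)*(A:ℝ)*(N:ℝ) + ((N:ℝ)*(N:ℝ)*(A:ℝ)
        + ((N:ℝ)+(N:ℝ)*(p:ℝ)^d)*((2*(N:ℝ)+(N:ℝ)*(p:ℝ)^d)*(A:ℝ)))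
        ≤ 10*((p:ℝ)^d)^2*(N:ℝ)^2*(A:ℝ) := by nlinarith [hfac]
    have e78 : (b7.card:ℝ) + (b8.card:ℝ) ≤ 10*((p:ℝ)^d)^2*(N:ℝ)^2*(A:ℝ) := by
      have s7 : (b7.card:ℝ) ≤ (2*(N:ℝ)+(N:ℝ)*(p:ℝ)^d)*(A:ℝ)*(N:ℝ) := by
        refine le_trans e7 ?_
        have := mul_le_mul_of_nonneg_right c3 (le_trans zero_le_one hNR1)
        linarith
      have s8 : (b8.card:ℝ) ≤ (N:ℝ)*(N:ℝ)*(A:ℝ)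
          + ((N:ℝ)+(N:ℝ)*(p:ℝ)^d)*((2*(N:ℝ)+(N:ℝ)*(p:ℝ)^d)*(A:ℝ)) := by
        refine le_trans e8 ?_
        linarith [c5, c6]
      linarith [c7]
    have hAbound : 10*((p:ℝ)^d)^2*(N:ℝ)^2*(A:ℝ) ≤ 10*((p:ℝ)^d)^3*ε*(N:ℝ)^4 := by
      have := mul_le_mul_of_nonneg_left hAR (show (0:ℝ) ≤ 10*((p:ℝ)^d)^2*(N:ℝ)^2 by positivity)
      nlinarith [this]
    linarith [hUR, e1, e2, e3, e4, e5, e6, e78, hAbound]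
  -- convert the goal
  rw [natcard_eq, hNc, ← hBaddef]
  clear hi hii natcard_eq hVcount hbij hBaddef hb6def hsub hU hg0 hBdef hAdef hgdef hPdef
    hAle hBle hb8 hFg hSdef hb8def hb7def hb5def hb4def hb3def hb2def hb1def hgcard hFdef
    hMdef hb8' hTrue hPbad hb6 hMlow hNM hb5 hb4 hb3 hb2 hb1 hb7 hcompl hMR hM0 hA0 hB0
    hAR hBR hMN
  clear S M F g A B Pbad b1 b2 b3 b4 b5 b6 b7 b8
  -- final case analysis
  have hN4 : (0:ℝ) ≤ (N:ℝ)^4 := by positivity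
  have hsqrt0 : (0:ℝ) ≤ Real.sqrt ε := Real.sqrt_nonneg ε
  have hp4d0 : (0:ℝ) ≤ (p:ℝ)^(4*d) := by positivity
  have hε'4 : 4*ε ≤ ε' := by
    rw [hε']
    nlinarith [mul_nonneg hp4d0 hsqrt0]
  rcases le_or_gt 1 ε with hε1 | hε1
  · -- trivial case ε ≥ 1
    have hBN : (Badset.card:ℝ) ≤ (N:ℝ)^4 := by
      have h1 : Badset.card ≤ N*(N*(N*N)) := by
        have h2 := Finset.card_le_univ Badset
        have h3 : Fintype.card (G × G × G × G) = N*(N*(N*N)) := by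
          simp [Fintype.card_prod, hN]
        rwa [h3] at h2
      have h4 : ((N*(N*(N*N)) : ℕ):ℝ) = (N:ℝ)^4 := by push_cast; ring
      calc (Badset.card:ℝ) ≤ ((N*(N*(N*N)) : ℕ):ℝ) := by exact_mod_cast h1
      _ = (N:ℝ)^4 := h4
    calc (Badset.card:ℝ) ≤ (N:ℝ)^4 := hBN
    _ ≤ 32*ε*(N:ℝ)^4 := by
        nlinarith [mul_nonneg (show (0:ℝ) ≤ 32*ε - 1 by linarith) hN4]
    _ ≤ 8*ε'*(N:ℝ)^4 := by
        nlinarith [mul_nonneg (show (0:ℝ) ≤ 8*ε' - 32*ε by linarith) hN4]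
  · -- main case ε < 1
    have hs1 : Real.sqrt ε ≤ 1 := by
      rw [show (1:ℝ) = Real.sqrt 1 from Real.sqrt_one.symm]
      exact Real.sqrt_le_sqrt hε1.le
    have hsq : ε ≤ Real.sqrt ε := by
      nlinarith [Real.sq_sqrt hε0.le, hsqrt0, hs1]
    rcases Nat.eq_zero_or_pos d with hd0 | hd1
    · have hpdeq : ((p:ℝ))^d = 1 := by rw [hd0, pow_zero]
      have hp4deq : ((p:ℝ))^(4*d) = 1 := by rw [hd0, mul_zero, pow_zero]
      have hcoef : 6*ε + 10*((p:ℝ)^d)^3*ε ≤ 8*ε' := by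
        rw [hε', hp4deq, hpdeq]
        nlinarith [hsqrt0]
      calc (Badset.card:ℝ) ≤ 6*ε*(N:ℝ)^4 + 10*((p:ℝ)^d)^3*ε*(N:ℝ)^4 := hmain
      _ = (6*ε + 10*((p:ℝ)^d)^3*ε)*(N:ℝ)^4 := by ring
      _ ≤ (8*ε')*(N:ℝ)^4 := mul_le_mul_of_nonneg_right hcoef hN4
      _ = 8*ε'*(N:ℝ)^4 := by ring
    · have hπ2 : (2:ℝ) ≤ (p:ℝ)^d := by
        have h1 : (2:ℝ) ≤ (p:ℝ) := by exact_mod_cast hp2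
        calc (2:ℝ) ≤ (p:ℝ) := h1
        _ = (p:ℝ)^1 := (pow_one _).symm
        _ ≤ (p:ℝ)^d := pow_le_pow_right₀ hp1R hd1
      have hp4d : ((p:ℝ))^(4*d) = ((p:ℝ)^d)^4 := by rw [mul_comm, pow_mul]
      have hπ30 : (0:ℝ) ≤ ((p:ℝ)^d)^3 := by positivity
      have hcoef : 6*ε + 10*((p:ℝ)^d)^3*ε ≤ 8*ε' := by
        rw [hε', hp4d]
        have k1 : (0:ℝ) ≤ (Real.sqrt ε - ε)*((p:ℝ)^d)^3 :=
          mul_nonneg (by linarith) hπ30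
        have k2 : (0:ℝ) ≤ ((p:ℝ)^d - 2)*(((p:ℝ)^d)^3*Real.sqrt ε) := by
          refine mul_nonneg (by linarith) (mul_nonneg hπ30 hsqrt0)
        nlinarith [k1, k2, hε0.le]
      calc (Badset.card:ℝ) ≤ 6*ε*(N:ℝ)^4 + 10*((p:ℝ)^d)^3*ε*(N:ℝ)^4 := hmain
      _ = (6*ε + 10*((p:ℝ)^d)^3*ε)*(N:ℝ)^4 := by ring
      _ ≤ (8*ε')*(N:ℝ)^4 := mul_le_mul_of_nonneg_right hcoef hN4
      _ = 8*ε'*(N:ℝ)^4 := by ring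
end

section
/- Let p be a prime, let G and H be finite-dimensional vector spaces over 𝔽_p, let δ ∈ (0,1], and let A ⊆ G × H be a transverse set with |A| ≥ δ|G||H|. Then there exists y₀ ∈ H such that |A_{·y₀}| ≥ (δ/2)|G| and |A_{x·}| ≥ (δ⁴/10⁴)|H| holds for every element x ∈ A_{·y₀}. -/
/-!
Since the columns of `A` are subgroups, if more than half of the column `A_{·y₀}` consists of
points `w` whose rows `A_{w·}` have density at least `δ/8`, then every `x ∈ A_{·y₀}` is a sum
`w₁ + w₂` of two such points. Additivity of the columns gives `A_{x·} ⊇ A_{w₁·} ∩ A_{w₂·}`, and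
two subgroups of density `δ/8` meet in a subgroup of density at least `(δ/8)²`.
Such a column of density `δ/2` exists by averaging: the columns of density below `δ/2` carry at
most half of the mass `δ|G||H|` of `A`, and the rows of density below `δ/8` at most an eighth.
-/

open Finset

namespace AddSubgroup

variable {G : Type*} [AddGroup G] [Finite G]

theorem card_mul_card_le_card_inf_mul_card (S T : AddSubgroup G) :
    Nat.card S * Nat.card T ≤ Nat.card ↥(S ⊓ T) * Nat.card G := by
  refine Nat.le_of_mul_le_mul_right ?_ (Nat.pos_of_ne_zero (S ⊓ T).index_ne_zero_of_finite)
  calc Nat.card S * Nat.card T * (S ⊓ T).index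
      ≤ Nat.card S * Nat.card T * (S.index * T.index) := by gcongr; exact index_inf_le
    _ = (Nat.card S * S.index) * (Nat.card T * T.index) := by ring
    _ = (Nat.card ↥(S ⊓ T) * (S ⊓ T).index) * Nat.card G := by
      rw [S.card_mul_index, T.card_mul_index, (S ⊓ T).card_mul_index]
    _ = Nat.card ↥(S ⊓ T) * Nat.card G * (S ⊓ T).index := by ring

theorem sq_mul_card_le_card_inf {S T : AddSubgroup G} {c : ℝ} (hc : 0 ≤ c)
    (hS : c * Nat.card G ≤ Nat.card S) (hT : c * Nat.card G ≤ Nat.card T) :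
    c ^ 2 * Nat.card G ≤ Nat.card ↥(S ⊓ T) := by
  have hG : (0 : ℝ) < Nat.card G := by exact_mod_cast Nat.card_pos
  refine le_of_mul_le_mul_right ?_ hG
  calc c ^ 2 * Nat.card G * Nat.card G = (c * Nat.card G) * (c * Nat.card G) := by ring
    _ ≤ Nat.card S * Nat.card T := by gcongr
    _ ≤ Nat.card ↥(S ⊓ T) * Nat.card G := by
      exact_mod_cast card_mul_card_le_card_inf_mul_card S T

theorem exists_add_eq_of_card_lt_two_mul {V : AddSubgroup G} {C : Set G} (hCV : C ⊆ V)
    (hcard : Nat.card V < 2 * Nat.card C) {x : G} (hx : x ∈ V) :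
    ∃ a ∈ C, ∃ b ∈ C, a + b = x := by
  have hxC : (x - ·) '' C ⊆ V := Set.image_subset_iff.2 fun a ha => V.sub_mem hx (hCV ha)
  have hunion := Set.ncard_union_add_ncard_inter C ((x - ·) '' C)
  rw [Set.ncard_image_of_injective _ sub_right_injective] at hunion
  have hle := Set.ncard_le_ncard (Set.union_subset hCV hxC)
  rw [← SetLike.coe_sort_coe, Nat.card_coe_set_eq, Nat.card_coe_set_eq] at hcard
  obtain ⟨a, haC, b, hbC, hab⟩ :=
    Set.nonempty_of_ncard_ne_zero (s := C ∩ (x - ·) '' C) (by omega)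
  exact ⟨a, haC, b, hbC, by rw [← hab, sub_add_cancel]⟩

end AddSubgroup

theorem Finset.sum_filter_lt_le_card_mul {ι : Type*} (s : Finset ι) (f : ι → ℝ) {c : ℝ}
    (hc : 0 ≤ c) : ∑ i ∈ s with f i < c, f i ≤ #s * c :=
  calc ∑ i ∈ s with f i < c, f i ≤ #{i ∈ s | f i < c} * c := by
        simpa using sum_le_card_nsmul _ _ c fun i hi => (mem_filter.1 hi).2.le
    _ ≤ #s * c := by gcongr; exact filter_subset _ _

theorem Finset.exists_dense_col_mostly_in_dense_rows {α β : Type*} (r : α → β → Prop)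
    [∀ a b, Decidable (r a b)] {s : Finset α} {t : Finset β} {δ : ℝ} (hδ : 0 < δ)
    (hs : s.Nonempty) (ht : t.Nonempty)
    (hdense : δ * #s * #t ≤ ∑ a ∈ s, (#(t.bipartiteAbove r a) : ℝ)) :
    ∃ b ∈ t, δ / 2 * #s ≤ #(s.bipartiteBelow r b) ∧
      #(s.bipartiteBelow r b) <
        2 * #({a ∈ s | δ / 8 * #t ≤ #(t.bipartiteAbove r a)}.bipartiteBelow r b) := by
  set row : α → ℝ := fun a => #(t.bipartiteAbove r a)
  set col : β → ℝ := fun b => #(s.bipartiteBelow r b)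
  set W := {a ∈ s | δ / 8 * #t ≤ row a}
  set L := {a ∈ s | row a < δ / 8 * #t}
  set heavy : β → ℝ := fun b => #(W.bipartiteBelow r b)
  set light : β → ℝ := fun b => #(L.bipartiteBelow r b)
  have hN : 0 < δ * #s * #t := by have := hs.card_pos; have := ht.card_pos; positivity
  have hcol_split (b : β) : col b = heavy b + light b := by
    have := card_filter_add_card_filter_not (s := s.bipartiteBelow r b) (δ / 8 * #t ≤ row ·)
    simp only [col, heavy, light, W, L, bipartiteBelow, filter_filter, not_le,
      and_comm (a := r _ b)] at this ⊢
    exact_mod_cast this.symm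
  have htotal : ∑ a ∈ s, row a = ∑ b ∈ t, col b := by
    simp only [row, col]
    exact_mod_cast sum_card_bipartiteAbove_eq_sum_card_bipartiteBelow r
  have hlight : ∑ b ∈ t, light b ≤ δ / 8 * #s * #t := by
    calc ∑ b ∈ t, light b = ∑ a ∈ L, row a := by
          simp only [light, row]
          exact_mod_cast (sum_card_bipartiteAbove_eq_sum_card_bipartiteBelow r).symm
      _ ≤ #s * (δ / 8 * #t) := sum_filter_lt_le_card_mul s row (by positivity)
      _ = δ / 8 * #s * #t := by ring
  have hthin : ∑ b ∈ t with ¬δ / 2 * #s ≤ col b, col b ≤ δ / 2 * #s * #t := by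
    simp only [not_le]
    linarith [sum_filter_lt_le_card_mul t col (c := δ / 2 * #s) (by positivity)]
  have hmajority : ∑ b ∈ t with δ / 2 * #s ≤ col b, 2 * light b <
      ∑ b ∈ t with δ / 2 * #s ≤ col b, col b := by
    have hsplit := sum_filter_add_sum_filter_not t (δ / 2 * #s ≤ col ·) col
    have hle := sum_le_sum_of_subset_of_nonneg (filter_subset (δ / 2 * #s ≤ col ·) t)
      (fun b _ _ => (by positivity : 0 ≤ light b))
    rw [← mul_sum]
    linarith
  obtain ⟨b, hb, hlt⟩ := exists_lt_of_sum_lt hmajority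
  rw [mem_filter] at hb
  refine ⟨b, hb.1, hb.2, ?_⟩
  have : col b < 2 * heavy b := by linarith [hcol_split b]
  simp only [col, heavy] at this
  exact_mod_cast this

theorem Set.natCard_eq_sum_natCard_row {α β : Type*} [Fintype α] [Fintype β]
    (A : Set (α × β)) : Nat.card A = ∑ x, Nat.card {y | (x, y) ∈ A} := by
  classical
  simp only [Nat.card_eq_fintype_card, Fintype.card_subtype, card_filter, Set.mem_ofPred_eq]
  exact Fintype.sum_prod_type (fun q : α × β => if q ∈ A then 1 else 0)

theorem Set.exists_dense_col_mostly_in_dense_rows {α β : Type*} [Finite α] [Finite β]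
    [Nonempty α] [Nonempty β] (A : Set (α × β)) {δ : ℝ} (hδ : 0 < δ)
    (hA : δ * Nat.card α * Nat.card β ≤ Nat.card A) :
    ∃ y, δ / 2 * Nat.card α ≤ Nat.card {x | (x, y) ∈ A} ∧
      Nat.card {x | (x, y) ∈ A} < 2 * Nat.card
        {x | (x, y) ∈ A ∧ δ / 8 * Nat.card β ≤ Nat.card {y' | (x, y') ∈ A}} := by
  classical
  cases nonempty_fintype α
  cases nonempty_fintype β
  rw [natCard_eq_sum_natCard_row] at hA
  simp only [Nat.card_eq_fintype_card, Fintype.card_subtype, Set.mem_ofPred_eq] at hA ⊢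
  obtain ⟨y, -, hy⟩ :=
    Finset.exists_dense_col_mostly_in_dense_rows (fun x y => (x, y) ∈ A) hδ
    Finset.univ_nonempty Finset.univ_nonempty (by simpa [bipartiteAbove] using hA)
  refine ⟨y, ?_⟩
  simpa [bipartiteBelow, bipartiteAbove, filter_filter, and_comm (b := (_, y) ∈ A)] using hy

theorem transverse_good_row_general
    (p : ℕ)
    (G H : Type) [AddCommGroup G] [AddCommGroup H]
    [Module (ZMod p) G] [Module (ZMod p) H]
    [Finite G] [Finite H]
    (δ : ℝ) (hδ0 : 0 < δ) (hδ1 : δ ≤ 1)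
    (A : Set (G × H))
    (hrow : ∀ x : G, ∃ S : Submodule (ZMod p) H, {y : H | (x, y) ∈ A} = ↑S)
    (hcol : ∀ y : H, ∃ S : Submodule (ZMod p) G, {x : G | (x, y) ∈ A} = ↑S)
    (hdense : (Nat.card A : ℝ) ≥ δ * Nat.card G * Nat.card H) :
    ∃ y₀ : H,
      (Nat.card {x : G | (x, y₀) ∈ A} : ℝ) ≥ (δ / 2) * Nat.card G ∧
      ∀ x : G, (x, y₀) ∈ A →
        (Nat.card {y : H | (x, y) ∈ A} : ℝ) ≥ (δ ^ 4 / 10 ^ 4) * Nat.card H := by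
  choose R hR using hrow
  choose C hC using hcol
  have hmemR (x : G) (y : H) : (x, y) ∈ A ↔ y ∈ R x := Set.ext_iff.1 (hR x) y
  have hmemC (x : G) (y : H) : (x, y) ∈ A ↔ x ∈ C y := Set.ext_iff.1 (hC y) x
  obtain ⟨y₀, hy₀, hmost⟩ := A.exists_dense_col_mostly_in_dense_rows hδ0 hdense
  refine ⟨y₀, hy₀, fun x hx => ?_⟩
  obtain ⟨w₁, ⟨-, hw₁⟩, w₂, ⟨-, hw₂⟩, rfl⟩ :=
    (C y₀).toAddSubgroup.exists_add_eq_of_card_lt_two_mul (hcard := hC y₀ ▸ hmost)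
      (fun a ha => (hmemC a y₀).1 ha.1) ((hmemC x y₀).1 hx)
  rw [hR] at hw₁ hw₂
  have hsub :
      ↑((R w₁).toAddSubgroup ⊓ (R w₂).toAddSubgroup) ⊆ {y | (w₁ + w₂, y) ∈ A} :=
    fun y ⟨h₁, h₂⟩ => (hmemC _ y).2 <|
      add_mem ((hmemC w₁ y).1 ((hmemR w₁ y).2 h₁)) ((hmemC w₂ y).1 ((hmemR w₂ y).2 h₂))
  calc δ ^ 4 / 10 ^ 4 * (Nat.card H : ℝ) ≤ (δ / 8) ^ 2 * Nat.card H := by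
        gcongr
        nlinarith [pow_le_pow_of_le_one hδ0.le hδ1 (show 2 ≤ 4 by norm_num)]
    _ ≤ (Nat.card ↥((R w₁).toAddSubgroup ⊓ (R w₂).toAddSubgroup) : ℝ) :=
        AddSubgroup.sq_mul_card_le_card_inf (by positivity) hw₁ hw₂
    _ ≤ (Nat.card {y | (w₁ + w₂, y) ∈ A} : ℝ) := by
        exact_mod_cast Nat.card_mono (Set.toFinite _) hsub

/-- A step in the proof of Lemma 13 of the paper: in a dense transverse set there is
a row `A_{·y₀}` of density at least `δ/2` all of whose elements index columns of
density at least `δ⁴/10⁴`. -/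
theorem transverse_good_row
    (p : ℕ) [Fact p.Prime]
    (G H : Type) [AddCommGroup G] [AddCommGroup H]
    [Module (ZMod p) G] [Module (ZMod p) H]
    [FiniteDimensional (ZMod p) G] [FiniteDimensional (ZMod p) H]
    [Finite G] [Finite H]
    (δ : ℝ) (hδ0 : 0 < δ) (hδ1 : δ ≤ 1)
    (A : Set (G × H))
    (hrow : ∀ x : G, ∃ S : Submodule (ZMod p) H, {y : H | (x, y) ∈ A} = ↑S)
    (hcol : ∀ y : H, ∃ S : Submodule (ZMod p) G, {x : G | (x, y) ∈ A} = ↑S)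
    (hdense : (Nat.card A : ℝ) ≥ δ * Nat.card G * Nat.card H) :
    ∃ y₀ : H,
      (Nat.card {x : G | (x, y₀) ∈ A} : ℝ) ≥ (δ / 2) * Nat.card G ∧
      ∀ x : G, (x, y₀) ∈ A →
        (Nat.card {y : H | (x, y) ∈ A} : ℝ) ≥ (δ ^ 4 / 10 ^ 4) * Nat.card H :=
  transverse_good_row_general p G H δ hδ0 hδ1 A hrow hcol hdense
end

section
/- Let p be a prime, let G and H be finite-dimensional vector spaces over 𝔽_p, and let A ⊆ G × H be a transverse set with |A| ≥ (15/16)|G||H|. Then A = G × H. -/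
/-- A proper submodule of a finite module has at most half the cardinality. -/
lemma two_mul_card_le_of_ne_top {p : ℕ} [Fact p.Prime] {V : Type} [AddCommGroup V]
    [Module (ZMod p) V] [Finite V] (S : Submodule (ZMod p) V) (hS : S ≠ ⊤) :
    2 * Nat.card S ≤ Nat.card V := by
  have hdvd : Nat.card S ∣ Nat.card V :=
    AddSubgroup.card_addSubgroup_dvd_card S.toAddSubgroup
  have hne : Nat.card S ≠ Nat.card V := by
    intro h
    exact hS (Submodule.toAddSubgroup_injective (by
      simpa using AddSubgroup.eq_top_of_card_eq S.toAddSubgroup h))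
  obtain ⟨k, hk⟩ := hdvd
  have hpos : 0 < Nat.card S := Nat.card_pos
  have hposV : 0 < Nat.card V := Nat.card_pos
  have hk2 : 2 ≤ k := by
    rcases Nat.lt_or_ge k 2 with h | h
    · interval_cases k <;> omega
    · exact h
  calc 2 * Nat.card S ≤ Nat.card S * k := by nlinarith
    _ = Nat.card V := hk.symm

/-- The closing remark of the paper: a transverse set of density at least `15/16`
is the full product `G × H`. -/
theorem transverse_dense_eq_univ
    (p : ℕ) [Fact p.Prime]
    (G H : Type) [AddCommGroup G] [AddCommGroup H]
    [Module (ZMod p) G] [Module (ZMod p) H]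
    [FiniteDimensional (ZMod p) G] [FiniteDimensional (ZMod p) H]
    [Finite G] [Finite H]
    (A : Set (G × H))
    (hrow : ∀ x : G, ∃ S : Submodule (ZMod p) H, {y : H | (x, y) ∈ A} = ↑S)
    (hcol : ∀ y : H, ∃ S : Submodule (ZMod p) G, {x : G | (x, y) ∈ A} = ↑S)
    (hdense : (Nat.card A : ℝ) ≥ (15 / 16) * Nat.card G * Nat.card H) :
    A = Set.univ := by
  classical
  cases nonempty_fintype G
  cases nonempty_fintype H
  by_contra hA
  obtain ⟨⟨x₀, y₀⟩, hz⟩ : ∃ z : G × H, z ∉ A := by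
    by_contra h
    push_neg at h
    exact hA (Set.eq_univ_of_forall h)
  -- the column at y₀ is a proper submodule
  obtain ⟨S₀, hS₀⟩ := hcol y₀
  have hS₀ne : S₀ ≠ ⊤ := by
    intro h
    apply hz
    have : x₀ ∈ {x : G | (x, y₀) ∈ A} := by rw [hS₀, h]; trivial
    exact this
  -- the set of "bad" rows
  set Bad : Finset G := Finset.univ.filter (fun x => (x, y₀) ∉ A) with hBad
  set Good : Finset G := Finset.univ.filter (fun x => (x, y₀) ∈ A) with hGood
  have hBadcard : Nat.card G ≤ 2 * Bad.card := by
    have hcompl : Good.card = Nat.card S₀ := by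
      rw [show (Nat.card S₀ : ℕ) = Nat.card ((S₀ : Set G) : Type) from
        (Nat.card_congr (Equiv.refl _)), ← hS₀, Nat.card_eq_card_toFinset]
      congr 1
      ext x
      simp [hGood]
    have hsplit : Good.card + Bad.card = Fintype.card G := by
      rw [hGood, hBad, Finset.card_filter_add_card_filter_not]
      exact Finset.card_univ
    have h2 : 2 * Nat.card S₀ ≤ Nat.card G := two_mul_card_le_of_ne_top S₀ hS₀ne
    have hcardG : Nat.card G = Fintype.card G := Nat.card_eq_fintype_card
    omega
  -- row counting
  set row : G → Finset H := fun x => Finset.univ.filter (fun y => (x, y) ∈ A) with hrowdef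
  have hAcard : Nat.card A = ∑ x : G, (row x).card := by
    rw [Nat.card_eq_card_toFinset]
    rw [Finset.card_eq_sum_card_fiberwise
      (f := Prod.fst) (t := Finset.univ) (fun z _ => Finset.mem_univ _)]
    apply Finset.sum_congr rfl
    intro x _
    apply Finset.card_nbij' (i := Prod.snd) (j := fun y => (x, y))
    · intro a ha
      simp only [Finset.mem_coe, Finset.mem_filter, Set.mem_toFinset] at ha
      simp only [hrowdef, Finset.mem_coe, Finset.mem_filter, Finset.mem_univ, true_and]
      rcases a with ⟨a1, a2⟩
      obtain ⟨h1, h2⟩ := ha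
      subst h2
      exact h1
    · intro y hy
      simp only [hrowdef, Finset.mem_coe, Finset.mem_filter, Finset.mem_univ, true_and] at hy
      simp [Finset.mem_filter, Set.mem_toFinset, hy]
    · intro a ha
      simp only [Finset.mem_coe, Finset.mem_filter, Set.mem_toFinset] at ha
      rcases a with ⟨a1, a2⟩
      obtain ⟨h1, h2⟩ := ha
      subst h2
      rfl
    · intro y _; rfl
  -- bad rows are small
  have hbadrow : ∀ x ∈ Bad, 2 * (row x).card ≤ Nat.card H := by
    intro x hx
    simp only [hBad, Finset.mem_filter, Finset.mem_univ, true_and] at hx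
    obtain ⟨Sx, hSx⟩ := hrow x
    have hSxne : Sx ≠ ⊤ := by
      intro h
      apply hx
      have : y₀ ∈ {y : H | (x, y) ∈ A} := by rw [hSx, h]; trivial
      exact this
    have hcard : (row x).card = Nat.card Sx := by
      rw [show (Nat.card Sx : ℕ) = Nat.card ((Sx : Set H) : Type) from
        (Nat.card_congr (Equiv.refl _)), ← hSx, Nat.card_eq_card_toFinset]
      congr 1
      ext y
      simp [hrowdef]
    rw [hcard]
    exact two_mul_card_le_of_ne_top Sx hSxne
  have hgoodrow : ∀ x : G, (row x).card ≤ Nat.card H := by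
    intro x
    rw [Nat.card_eq_fintype_card]
    exact Finset.card_le_card (Finset.subset_univ _)
  -- total count bound: 4 * |A| ≤ 3 * |G| * |H|
  have hmain : 4 * Nat.card A ≤ 3 * Nat.card G * Nat.card H := by
    have hsum : ∑ x : G, (row x).card
        = ∑ x ∈ Bad, (row x).card + ∑ x ∈ Good, (row x).card := by
      have heq : Finset.univ.filter (fun x : G => ¬(x, y₀) ∉ A)
          = Finset.univ.filter (fun x : G => (x, y₀) ∈ A) := by
        ext x; simp
      rw [hBad, hGood, ← heq, Finset.sum_filter_add_sum_filter_not]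
    have h1 : 2 * ∑ x ∈ Bad, (row x).card ≤ Bad.card * Nat.card H := by
      rw [Finset.mul_sum]
      calc ∑ x ∈ Bad, 2 * (row x).card ≤ ∑ _x ∈ Bad, Nat.card H :=
            Finset.sum_le_sum hbadrow
        _ = Bad.card * Nat.card H := by rw [Finset.sum_const, smul_eq_mul]
    have h2 : ∑ x ∈ Good, (row x).card ≤ Good.card * Nat.card H := by
      calc ∑ x ∈ Good, (row x).card ≤ ∑ _x ∈ Good, Nat.card H :=
            Finset.sum_le_sum (fun x _ => hgoodrow x)
        _ = Good.card * Nat.card H := by rw [Finset.sum_const, smul_eq_mul]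
    have hcompl : Good.card + Bad.card = Nat.card G := by
      rw [Nat.card_eq_fintype_card, hGood, hBad,
        Finset.card_filter_add_card_filter_not]
      exact Finset.card_univ
    have hH : 0 < Nat.card H := Nat.card_pos
    rw [hAcard, hsum]
    nlinarith [h1, h2, hBadcard, hcompl]
  -- contradiction with density
  have hGH : (1 : ℝ) ≤ (Nat.card G : ℝ) * Nat.card H := by
    have hG : (1 : ℕ) ≤ Nat.card G := Nat.card_pos
    have hH : (1 : ℕ) ≤ Nat.card H := Nat.card_pos
    have h1 : (1 : ℝ) ≤ (Nat.card G : ℝ) := by exact_mod_cast hG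
    have h2 : (1 : ℝ) ≤ (Nat.card H : ℝ) := by exact_mod_cast hH
    nlinarith
  have hmainR : (4 : ℝ) * Nat.card A ≤ 3 * Nat.card G * Nat.card H := by
    exact_mod_cast hmain
  nlinarith [hdense, hmainR, hGH]
end
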